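/- arXiv:2409.08436 — 8 statements merged into one kernel-verified Lean document; each statement's English description precedes it below -/
import Mathlib

section
/- For any orthonormal basis {|j⟩}_{j=1}^{2^N} of (ℂ²)^{⊗N}, the average over all 6^N states |ψ⟩ ∈ S of Σ_{j=1}^{2^N} |⟨j|ψ⟩|⁴ is at most (2/3)^N. Equivalently, E_{|ψ⟩∼𝓔} 1/D^eff_ψ ≤ (2/3)^N, where 𝓔 is the uniform distribution over S and the effective dimension is defined with respect to the given basis. -/
open scoped Matrix ComplexConjugate

/-- The six single-qubit states `|x^±⟩, |y^±⟩, |z^±⟩`: unit eigenvectors of the Pauli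
matrices `σˣ, σʸ, σᶻ` with eigenvalues `±1`. -/
noncomputable def qs : Fin 6 → Fin 2 → ℂ
  | 0 => ![(Real.sqrt 2 : ℂ)⁻¹, (Real.sqrt 2 : ℂ)⁻¹]
  | 1 => ![(Real.sqrt 2 : ℂ)⁻¹, -(Real.sqrt 2 : ℂ)⁻¹]
  | 2 => ![(Real.sqrt 2 : ℂ)⁻¹, Complex.I * (Real.sqrt 2 : ℂ)⁻¹]
  | 3 => ![(Real.sqrt 2 : ℂ)⁻¹, -(Complex.I * (Real.sqrt 2 : ℂ)⁻¹)]
  | 4 => ![1, 0]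
  | 5 => ![0, 1]

/-- The product state `⊗_i |f i⟩ ∈ (ℂ²)^{⊗N}`; as `f` ranges over `Fin N → Fin 6`,
these are exactly the `6^N` elements of `S`. -/
noncomputable def prodState {N : ℕ} (f : Fin N → Fin 6) : (Fin N → Fin 2) → ℂ :=
  fun x => ∏ i, qs (f i) (x i)

/-!
The six states form a 2-design on each qubit, which makes the fourth moment over `S`
factorize qubit by qubit. Write a state on `N + 1` qubits as `|0⟩ ⊗ w₀ + |1⟩ ⊗ w₁`; its overlap
with `|q_s⟩ ⊗ |ψ⟩` is the overlap of `v_s = conj (q_s 0) w₀ + conj (q_s 1) w₁` with `|ψ⟩`, and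
`∑_s ‖v_s‖⁴ = ‖w₀‖⁴ + ‖w₁‖⁴ + (‖w₀‖² + ‖w₁‖²)² + 2 |⟨w₀, w₁⟩|² ≤ 2 ‖w‖⁴` by Cauchy–Schwarz.
By induction `∑_f |⟨w, ψ_f⟩|⁴ ≤ 2^N ‖w‖⁴` for every `w`; summing over the `2^N` unit basis
vectors and dividing by `6^N` gives `(2/3)^N`.
-/

open scoped InnerProductSpace

theorem Fin.sum_pi_succ {α M : Type*} [Fintype α] [AddCommMonoid M] {n : ℕ}
    (g : (Fin (n + 1) → α) → M) :
    ∑ x, g x = ∑ a, ∑ x : Fin n → α, g (Fin.cons a x) := by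
  rw [← (Fin.consEquiv fun _ => α).sum_comp, Fintype.sum_prod_type]
  rfl

theorem norm_smul_add_smul_sq {E : Type*} [NormedAddCommGroup E] [InnerProductSpace ℂ E]
    (c₀ c₁ : ℂ) (x y : E) :
    ‖c₀ • x + c₁ • y‖ ^ 2
      = ‖c₀‖ ^ 2 * ‖x‖ ^ 2 + ‖c₁‖ ^ 2 * ‖y‖ ^ 2 + 2 * (conj c₀ * c₁ * ⟪x, y⟫_ℂ).re := by
  rw [@norm_add_sq ℂ, norm_smul, norm_smul, inner_smul_left, inner_smul_right, mul_assoc,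
    RCLike.re_to_complex]
  ring

theorem sum_norm_qs_smul_add_qs_smul_pow_four_le {E : Type*} [NormedAddCommGroup E]
    [InnerProductSpace ℂ E] (x y : E) :
    ∑ s : Fin 6, ‖conj (qs s 0) • x + conj (qs s 1) • y‖ ^ 4
      ≤ 2 * (‖x‖ ^ 2 + ‖y‖ ^ 2) ^ 2 := by
  have hsqrt : Real.sqrt 2 / 2 * (Real.sqrt 2 / 2) = 1 / 2 := by
    rw [div_mul_div_comm, Real.mul_self_sqrt] <;> norm_num
  have hγ : (⟪x, y⟫_ℂ).re ^ 2 + (⟪x, y⟫_ℂ).im ^ 2 ≤ ‖x‖ ^ 2 * ‖y‖ ^ 2 := by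
    calc (⟪x, y⟫_ℂ).re ^ 2 + (⟪x, y⟫_ℂ).im ^ 2 = ‖⟪x, y⟫_ℂ‖ ^ 2 := by
          rw [Complex.sq_norm, Complex.normSq_apply]; ring
      _ ≤ (‖x‖ * ‖y‖) ^ 2 := by gcongr; exact norm_inner_le_norm x y
      _ = ‖x‖ ^ 2 * ‖y‖ ^ 2 := mul_pow _ _ _
  simp only [Fin.sum_univ_six, show ∀ r : ℝ, r ^ 4 = (r ^ 2) ^ 2 from fun r => by ring,
    norm_smul_add_smul_sq]
  simp [qs, hsqrt]
  nlinarith [hγ]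

def firstQubitSlice {N : ℕ} (w : EuclideanSpace ℂ (Fin (N + 1) → Fin 2)) (a : Fin 2) :
    EuclideanSpace ℂ (Fin N → Fin 2) :=
  WithLp.toLp 2 fun x => w (Fin.cons a x)

theorem norm_sq_eq_sum_norm_firstQubitSlice_sq {N : ℕ}
    (w : EuclideanSpace ℂ (Fin (N + 1) → Fin 2)) :
    ‖w‖ ^ 2 = ‖firstQubitSlice w 0‖ ^ 2 + ‖firstQubitSlice w 1‖ ^ 2 := by
  simp only [EuclideanSpace.norm_sq_eq, Fin.sum_pi_succ, Fin.sum_univ_two, firstQubitSlice]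

theorem prodState_cons {N : ℕ} (s : Fin 6) (f : Fin N → Fin 6) (a : Fin 2) (x : Fin N → Fin 2) :
    prodState (Fin.cons s f : Fin (N + 1) → Fin 6) (Fin.cons a x) = qs s a * prodState f x :=
  Fin.prod_univ_succ _

theorem inner_prodState_cons {N : ℕ} (w : EuclideanSpace ℂ (Fin (N + 1) → Fin 2)) (s : Fin 6)
    (f : Fin N → Fin 6) :
    ⟪w, WithLp.toLp 2 (prodState (Fin.cons s f : Fin (N + 1) → Fin 6))⟫_ℂ
      = ⟪conj (qs s 0) • firstQubitSlice w 0 + conj (qs s 1) • firstQubitSlice w 1,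
          WithLp.toLp 2 (prodState f)⟫_ℂ := by
  simp only [EuclideanSpace.inner_eq_star_dotProduct, inner_add_left, inner_smul_left,
    Complex.conj_conj, dotProduct, Fin.sum_pi_succ, Fin.sum_univ_two, prodState_cons,
    Finset.mul_sum, firstQubitSlice, Pi.star_apply, mul_assoc]

theorem sum_norm_inner_prodState_pow_four_le (N : ℕ) (w : EuclideanSpace ℂ (Fin N → Fin 2)) :
    ∑ f : Fin N → Fin 6, ‖⟪w, WithLp.toLp 2 (prodState f)⟫_ℂ‖ ^ 4 ≤ 2 ^ N * ‖w‖ ^ 4 := by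
  induction N with
  | zero =>
    simp [prodState, EuclideanSpace.inner_eq_star_dotProduct, dotProduct, EuclideanSpace.norm_eq]
  | succ N ih =>
    calc ∑ f : Fin (N + 1) → Fin 6, ‖⟪w, WithLp.toLp 2 (prodState f)⟫_ℂ‖ ^ 4
        = ∑ s, ∑ f : Fin N → Fin 6,
            ‖⟪conj (qs s 0) • firstQubitSlice w 0 + conj (qs s 1) • firstQubitSlice w 1,
              WithLp.toLp 2 (prodState f)⟫_ℂ‖ ^ 4 := by
          simp only [Fin.sum_pi_succ, inner_prodState_cons]
      _ ≤ ∑ s : Fin 6, 2 ^ N *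
            ‖conj (qs s 0) • firstQubitSlice w 0 + conj (qs s 1) • firstQubitSlice w 1‖ ^ 4 :=
          Finset.sum_le_sum fun s _ => ih _
      _ ≤ 2 ^ N * (2 * (‖firstQubitSlice w 0‖ ^ 2 + ‖firstQubitSlice w 1‖ ^ 2) ^ 2) := by
          rw [← Finset.mul_sum]
          gcongr
          exact sum_norm_qs_smul_add_qs_smul_pow_four_le _ _
      _ = 2 ^ (N + 1) * ‖w‖ ^ 4 := by
          rw [← norm_sq_eq_sum_norm_firstQubitSlice_sq]
          ring

/-- For any orthonormal basis `{|j⟩}` of `(ℂ²)^{⊗N}`, the average over all `6^N` states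
`|ψ⟩ ∈ S` of `Σ_j |⟨j|ψ⟩|⁴` (i.e. `E_{|ψ⟩∼𝓔} 1/D^eff_ψ`) is at most `(2/3)^N`. -/
theorem average_inverse_effective_dimension_le (N : ℕ)
    (b : (Fin N → Fin 2) → ((Fin N → Fin 2) → ℂ))
    (hb : ∀ j k, star (b j) ⬝ᵥ b k = if j = k then 1 else 0) :
    ((6 : ℝ) ^ N)⁻¹ *
        ∑ f : Fin N → Fin 6, ∑ j : Fin N → Fin 2, ‖star (b j) ⬝ᵥ prodState f‖ ^ 4
      ≤ (2 / 3 : ℝ) ^ N := by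
  have hunit : ∀ j, ‖WithLp.toLp 2 (b j)‖ = 1 := fun j => by
    have h : ‖WithLp.toLp 2 (b j)‖ ^ 2 = 1 := by
      rw [@norm_sq_eq_re_inner ℂ, EuclideanSpace.inner_toLp_toLp, dotProduct_comm, hb, if_pos rfl,
        RCLike.one_re]
    exact (pow_eq_one_iff_of_nonneg (norm_nonneg _) two_ne_zero).mp h
  calc ((6 : ℝ) ^ N)⁻¹ *
        ∑ f : Fin N → Fin 6, ∑ j : Fin N → Fin 2, ‖star (b j) ⬝ᵥ prodState f‖ ^ 4
      = ((6 : ℝ) ^ N)⁻¹ * ∑ j : Fin N → Fin 2, ∑ f : Fin N → Fin 6,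
          ‖⟪WithLp.toLp 2 (b j), WithLp.toLp 2 (prodState f)⟫_ℂ‖ ^ 4 := by
        simp only [EuclideanSpace.inner_toLp_toLp, dotProduct_comm (prodState _)]
        rw [Finset.sum_comm]
    _ ≤ ((6 : ℝ) ^ N)⁻¹ * ∑ _j : Fin N → Fin 2, (2 : ℝ) ^ N := by
        gcongr with j
        simpa [hunit j] using sum_norm_inner_prodState_pow_four_le N (WithLp.toLp 2 (b j))
    _ = (2 / 3 : ℝ) ^ N := by
        rw [Finset.sum_const, Finset.card_univ, Fintype.card_fun, Fintype.card_fin,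
          Fintype.card_fin, nsmul_eq_mul, Nat.cast_pow, ← inv_pow, ← mul_pow, ← mul_pow]
        norm_num
end

section
/- For any orthonormal basis {|j⟩}_{j=1}^{2^N} of (ℂ²)^{⊗N}, if |ψ⟩ is drawn uniformly at random from S, then with probability at least 1 − (2/3)^{N/2} one has Σ_{j=1}^{2^N} |⟨j|ψ⟩|⁴ ≤ (2/3)^{N/2}, i.e., D^eff_ψ ≥ (3/2)^{N/2}. -/
open scoped Matrix ComplexConjugate

/-!
The six single-qubit states form a 2-design: `∑ₛ |s⟩⟨s|^{⊗2} = 1 + SWAP`. Tensoring over the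
qubits, `∑_f |ψ_f⟩⟨ψ_f|^{⊗2}` is the sum of the `2^N` partial swaps of the two copies, each a
permutation of the computational basis. Hence for a unit vector `a`, `∑_f |⟨a|ψ_f⟩|⁴` is a sum of
`2^N` terms `⟨a ⊗ a|P|a ⊗ a⟩ ≤ 1`. Summing over the `2^N` basis vectors, the average over `f` of
`∑_j |⟨j|ψ_f⟩|⁴` is at most `(4/6)^N = t²` with `t = (2/3)^{N/2}`, and Markov's inequality bounds
the fraction of `f` where it exceeds `t` by `t`.
-/

theorem ofReal_sum_norm_sum_mul_sq {ι α : Type*} [Fintype ι] [Fintype α] (A : α → ℂ)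
    (Ψ : ι → α → ℂ) :
    ((∑ f, ‖∑ p, A p * Ψ f p‖ ^ 2 : ℝ) : ℂ) =
      ∑ p, ∑ q, A p * conj (A q) * ∑ f, Ψ f p * conj (Ψ f q) := by
  simp only [Complex.ofReal_sum, Complex.ofReal_pow, ← Complex.mul_conj', map_sum, map_mul,
    Finset.sum_mul, Finset.mul_sum]
  conv_rhs => rw [Finset.sum_comm]
  rw [Finset.sum_comm]
  refine Finset.sum_congr rfl fun p _ => ?_
  rw [Finset.sum_comm]
  refine Finset.sum_congr rfl fun q _ => Finset.sum_congr rfl fun f _ => by ring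

theorem re_sum_mul_conj_comp_le {α : Type*} [Fintype α] (A : α → ℂ) {σ : α → α}
    (hσ : Function.Bijective σ) :
    (∑ p, A p * conj (A (σ p))).re ≤ ∑ p, ‖A p‖ ^ 2 := by
  have hσsum : ∑ p, ‖A (σ p)‖ ^ 2 = ∑ p, ‖A p‖ ^ 2 :=
    Fintype.sum_bijective σ hσ _ _ fun _ => rfl
  calc (∑ p, A p * conj (A (σ p))).re
      ≤ ∑ p, ‖A p‖ * ‖A (σ p)‖ := by
        rw [Complex.re_sum]
        refine Finset.sum_le_sum fun p _ => (Complex.re_le_norm _).trans_eq ?_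
        rw [norm_mul, Complex.norm_conj]
    _ ≤ ∑ p, (‖A p‖ ^ 2 + ‖A (σ p)‖ ^ 2) / 2 :=
        Finset.sum_le_sum fun p _ => by nlinarith [sq_nonneg (‖A p‖ - ‖A (σ p)‖)]
    _ = ∑ p, ‖A p‖ ^ 2 := by
        rw [← Finset.sum_div, Finset.sum_add_distrib, hσsum]; ring

theorem star_dotProduct_self_eq_sum_norm_sq {α : Type*} [Fintype α] (a : α → ℂ) :
    star a ⬝ᵥ a = ((∑ x, ‖a x‖ ^ 2 : ℝ) : ℂ) := by
  simp [dotProduct, Complex.conj_mul']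

theorem one_sub_le_card_filter_le_div_card {α : Type*} [Fintype α] [Nonempty α] {X : α → ℝ}
    {t : ℝ} (hX : ∀ a, 0 ≤ X a) (ht : 0 < t) (hsum : ∑ a, X a ≤ Fintype.card α * t ^ 2) :
    1 - t ≤ ((Finset.univ.filter fun a => X a ≤ t).card : ℝ) / Fintype.card α := by
  have hbad : ((Finset.univ.filter fun a => ¬ X a ≤ t).card : ℝ) * t ≤ ∑ a, X a :=
    calc ((Finset.univ.filter fun a => ¬ X a ≤ t).card : ℝ) * t
        ≤ ∑ a ∈ Finset.univ.filter fun a => ¬ X a ≤ t, X a := by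
          rw [← nsmul_eq_mul]
          exact Finset.card_nsmul_le_sum _ _ _ fun a ha =>
            (not_le.mp (Finset.mem_filter.mp ha).2).le
      _ ≤ ∑ a, X a :=
          Finset.sum_le_sum_of_subset_of_nonneg (Finset.subset_univ _) fun a _ _ => hX a
  have hcard : ((Finset.univ.filter fun a => X a ≤ t).card : ℝ) +
      (Finset.univ.filter fun a => ¬ X a ≤ t).card = Fintype.card α :=
    mod_cast Finset.card_filter_add_card_filter_not _
  have hbad_le : ((Finset.univ.filter fun a => ¬ X a ≤ t).card : ℝ) ≤ Fintype.card α * t :=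
    le_of_mul_le_mul_right (hbad.trans (hsum.trans_eq (by ring))) ht
  rw [le_div_iff₀ (Nat.cast_pos.mpr Fintype.card_pos)]
  linarith

theorem sum_qs_mul_qs_mul_conj (x z y w : Fin 2) :
    ∑ s, qs s x * qs s z * conj (qs s y * qs s w) =
      ∑ u : Bool, if y = (if u then z else x) ∧ w = (if u then x else z) then 1 else 0 := by
  have hconj : conj ((Real.sqrt 2 : ℂ)⁻¹) = (Real.sqrt 2 : ℂ)⁻¹ := by
    rw [map_inv₀, Complex.conj_ofReal]
  have hpow : (Real.sqrt 2 : ℂ) ^ 4 = 4 := by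
    rw [show 4 = 2 * 2 by rfl, pow_mul, ← Complex.ofReal_pow, Real.sq_sqrt zero_le_two]
    norm_num
  rw [Fin.sum_univ_six, Fintype.sum_bool]
  fin_cases x <;> fin_cases y <;> fin_cases z <;> fin_cases w <;>
    simp [qs, hconj] <;> ring_nf <;> norm_num [hpow, Complex.I_sq]

def partialSwap {ι β : Type*} (g : ι → Bool) (p : (ι → β) × (ι → β)) : (ι → β) × (ι → β) :=
  (fun i => if g i then p.2 i else p.1 i, fun i => if g i then p.1 i else p.2 i)

theorem partialSwap_involutive {ι β : Type*} (g : ι → Bool) :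
    Function.Involutive (partialSwap (β := β) g) := by
  intro p
  ext i <;> by_cases h : g i <;> simp [partialSwap, h]

theorem sum_prodState_mul_prodState_mul_conj {N : ℕ} (p q : (Fin N → Fin 2) × (Fin N → Fin 2)) :
    ∑ f : Fin N → Fin 6,
        prodState f p.1 * prodState f p.2 * conj (prodState f q.1 * prodState f q.2) =
      ∑ g : Fin N → Bool, if q = partialSwap g p then 1 else 0 := by
  calc ∑ f : Fin N → Fin 6,
        prodState f p.1 * prodState f p.2 * conj (prodState f q.1 * prodState f q.2)
      = ∏ i, ∑ s, qs s (p.1 i) * qs s (p.2 i) * conj (qs s (q.1 i) * qs s (q.2 i)) := by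
        rw [Fintype.prod_sum]
        simp only [prodState, ← Finset.prod_mul_distrib, map_prod]
    _ = ∏ i, ∑ u : Bool, if q.1 i = (if u then p.2 i else p.1 i) ∧
          q.2 i = (if u then p.1 i else p.2 i) then 1 else 0 := by
        simp only [sum_qs_mul_qs_mul_conj]
    _ = ∑ g : Fin N → Bool, if q = partialSwap g p then 1 else 0 := by
        rw [Fintype.prod_sum]
        simp only [Fintype.prod_boole, forall_and, ← funext_iff, Prod.ext_iff, partialSwap]

theorem sum_norm_star_dotProduct_prodState_pow_four_le {N : ℕ} (a : (Fin N → Fin 2) → ℂ) :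
    ∑ f : Fin N → Fin 6, ‖star a ⬝ᵥ prodState f‖ ^ 4 ≤ 2 ^ N * (∑ x, ‖a x‖ ^ 2) ^ 2 := by
  set A : (Fin N → Fin 2) × (Fin N → Fin 2) → ℂ := fun p => star (a p.1) * star (a p.2)
  have hsq : ∀ f : Fin N → Fin 6, ‖star a ⬝ᵥ prodState f‖ ^ 4 =
      ‖∑ p, A p * (prodState f p.1 * prodState f p.2)‖ ^ 2 := by
    intro f
    rw [show 4 = 2 * 2 by rfl, pow_mul, ← norm_pow, sq (star a ⬝ᵥ prodState f), dotProduct,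
      Finset.sum_mul_sum, Fintype.sum_prod_type]
    congr 2
    refine Finset.sum_congr rfl fun x _ => Finset.sum_congr rfl fun y _ => ?_
    simp only [A, Pi.star_apply]
    ring
  have hexpand : ((∑ f, ‖∑ p, A p * (prodState f p.1 * prodState f p.2)‖ ^ 2 : ℝ) : ℂ) =
      ∑ g : Fin N → Bool, ∑ p, A p * conj (A (partialSwap g p)) := by
    simp only [ofReal_sum_norm_sum_mul_sq, sum_prodState_mul_prodState_mul_conj, Finset.mul_sum,
      mul_ite, mul_one, mul_zero]
    conv_rhs => rw [Finset.sum_comm]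
    refine Finset.sum_congr rfl fun p _ => ?_
    rw [Finset.sum_comm]
    simp only [Finset.sum_ite_eq', Finset.mem_univ, if_true]
  calc ∑ f, ‖star a ⬝ᵥ prodState f‖ ^ 4
      = (∑ g : Fin N → Bool, ∑ p, A p * conj (A (partialSwap g p))).re := by
        simp only [hsq]; rw [← hexpand, Complex.ofReal_re]
    _ = ∑ g : Fin N → Bool, (∑ p, A p * conj (A (partialSwap g p))).re := Complex.re_sum _ _
    _ ≤ ∑ g : Fin N → Bool, ∑ p, ‖A p‖ ^ 2 :=
        Finset.sum_le_sum fun g _ => re_sum_mul_conj_comp_le A (partialSwap_involutive g).bijective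
    _ = 2 ^ N * (∑ x, ‖a x‖ ^ 2) ^ 2 := by
        simp only [A, norm_mul, norm_star, mul_pow, Fintype.sum_prod_type, ← Finset.sum_mul_sum,
          Finset.sum_const, Finset.card_univ, Fintype.card_fun, Fintype.card_bool, Fintype.card_fin,
          nsmul_eq_mul]
        push_cast; ring

/-- For any orthonormal basis `{|j⟩}` of `(ℂ²)^{⊗N}`, if `|ψ⟩` is drawn uniformly at random
from `S`, then with probability at least `1 − (2/3)^{N/2}` one has
`Σ_j |⟨j|ψ⟩|⁴ ≤ (2/3)^{N/2}`, i.e. `D^eff_ψ ≥ (3/2)^{N/2}`. -/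
theorem effective_dimension_large_with_high_probability (N : ℕ)
    (b : (Fin N → Fin 2) → ((Fin N → Fin 2) → ℂ))
    (hb : ∀ j k, star (b j) ⬝ᵥ b k = if j = k then 1 else 0) :
    1 - (2 / 3 : ℝ) ^ ((N : ℝ) / 2) ≤
      ((Finset.univ.filter fun f : Fin N → Fin 6 =>
          ∑ j : Fin N → Fin 2, ‖star (b j) ⬝ᵥ prodState f‖ ^ 4 ≤ (2 / 3 : ℝ) ^ ((N : ℝ) / 2)).card : ℝ)
        / 6 ^ N := by
  set t : ℝ := (2 / 3 : ℝ) ^ ((N : ℝ) / 2)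
  have ht : 0 < t := by positivity
  have ht2 : t ^ 2 = (2 / 3 : ℝ) ^ N := by
    rw [← Real.rpow_natCast t, ← Real.rpow_mul (by norm_num), ← Real.rpow_natCast]
    congr 1; push_cast; ring
  have hunit : ∀ j, ∑ x, ‖b j x‖ ^ 2 = 1 := fun j =>
    mod_cast (star_dotProduct_self_eq_sum_norm_sq (b j)).symm.trans ((hb j j).trans (if_pos rfl))
  have hmoment : ∑ f : Fin N → Fin 6, ∑ j, ‖star (b j) ⬝ᵥ prodState f‖ ^ 4 ≤
      Fintype.card (Fin N → Fin 6) * t ^ 2 :=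
    calc ∑ f : Fin N → Fin 6, ∑ j, ‖star (b j) ⬝ᵥ prodState f‖ ^ 4
        = ∑ j, ∑ f : Fin N → Fin 6, ‖star (b j) ⬝ᵥ prodState f‖ ^ 4 := Finset.sum_comm
      _ ≤ ∑ j : Fin N → Fin 2, (2 : ℝ) ^ N := Finset.sum_le_sum fun j _ => by
          simpa [hunit j] using sum_norm_star_dotProduct_prodState_pow_four_le (b j)
      _ = Fintype.card (Fin N → Fin 6) * t ^ 2 := by
          simp [ht2, ← mul_pow]; norm_num
  simpa [Fintype.card_fun] using
    one_sub_le_card_filter_le_div_card (fun f => by positivity) ht hmoment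
end

section
/- Let ρ ∈ S^+, let A be the set of qubits on which ρ is a pure state (not I₂/2), and let |φ⟩_A be the corresponding pure product state of the qubits in A. Then for every unit vector |j⟩ ∈ (ℂ²)^{⊗N}, Σ_{|ψ⟩∈S_ρ} |⟨j|ψ⟩|⁴ ≤ 2^{n(ρ)} ⟨j| (|φ⟩_A⟨φ|_A ⊗ I_Ā) |j⟩, where I_Ā is the identity operator on the remaining qubits. -/
open scoped Matrix ComplexConjugate

/-- Single-qubit density matrices indexing `S^+`: for `k < 6` the pure projector
`|v_k⟩⟨v_k|`, and for `k = 6` the maximally mixed state `I₂/2`. -/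
noncomputable def qsDM (k : Fin 7) : Matrix (Fin 2) (Fin 2) ℂ :=
  if h : (k : ℕ) < 6 then Matrix.of fun a b => qs ⟨k, h⟩ a * conj (qs ⟨k, h⟩ b)
  else (2 : ℂ)⁻¹ • 1

/-- The element `ρ = ⊗_i qsDM (g i)` of `S^+` determined by `g : Fin N → Fin 7`. -/
noncomputable def sPlusState {N : ℕ} (g : Fin N → Fin 7) :
    Matrix (Fin N → Fin 2) (Fin N → Fin 2) ℂ :=
  Matrix.of fun x y => ∏ i, qsDM (g i) (x i) (y i)

/-- `n(ρ)`: the number of tensor factors of `ρ ∈ S^+` equal to `I₂/2`. -/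
def nMix {N : ℕ} (g : Fin N → Fin 7) : ℕ :=
  (Finset.univ.filter fun i => g i = 6).card

/-- `S_ρ`: the product states in `S` that agree with `ρ ∈ S^+` on every qubit where `ρ`
is pure. -/
def Srho {N : ℕ} (g : Fin N → Fin 7) : Finset (Fin N → Fin 6) :=
  Finset.univ.filter fun f => ∀ i, g i ≠ 6 → (g i : ℕ) = (f i : ℕ)

/-- The operator `|φ⟩_A⟨φ|_A ⊗ I_Ā`, where `A` is the set of qubits on which `ρ ∈ S^+` is
pure (not `I₂/2`), `|φ⟩_A` is the corresponding pure product state of the qubits in `A`,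
and `I_Ā` is the identity on the remaining qubits. -/
noncomputable def pureProjA {N : ℕ} (g : Fin N → Fin 7) :
    Matrix (Fin N → Fin 2) (Fin N → Fin 2) ℂ :=
  Matrix.of fun x y => ∏ i,
    if g i = 6 then (if x i = y i then (1 : ℂ) else 0) else qsDM (g i) (x i) (y i)

/-!
Let `Q(ρ) = ⟨j|Π_ρ|j⟩`, where `Π_ρ = |φ⟩_A⟨φ|_A ⊗ I_Ā`. With all qubits but one fixed, `Q` is
`B ↦ tr (B R)` for a positive semidefinite `2 × 2` matrix `R` (a partial trace), and because the six
Pauli eigenstates form a 2-design, `∑ₖ tr (Pₖ R)² = 2 (tr R)² - 2 det R ≤ 2 (tr R)²`. Splitting one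
mixed qubit at a time gives `∑_{ψ ∈ S_ρ} |⟨j|ψ⟩|⁴ ≤ 2^{n(ρ)} Q(ρ)²`, and `Q(ρ)² ≤ Q(ρ)` since `Π_ρ` is
a projection and `j` a unit vector.
-/

open scoped ComplexOrder

namespace Matrix

variable {ι m n p α : Type*} [Fintype ι]

def piKronecker [CommMonoid α] (A : ι → Matrix m n α) : Matrix (ι → m) (ι → n) α :=
  of fun x y => ∏ i, A i (x i) (y i)

@[simp]
theorem piKronecker_apply [CommMonoid α] (A : ι → Matrix m n α) (x : ι → m) (y : ι → n) :
    piKronecker A x y = ∏ i, A i (x i) (y i) := rfl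

theorem piKronecker_update_apply [CommMonoid α] [DecidableEq ι] (A : ι → Matrix m n α) (i₀ : ι)
    (B : Matrix m n α) (x : ι → m) (y : ι → n) :
    piKronecker (Function.update A i₀ B) x y =
      B (x i₀) (y i₀) * ∏ i ∈ Finset.univ.erase i₀, A i (x i) (y i) := by
  rw [piKronecker_apply, ← Finset.mul_prod_erase _ _ (Finset.mem_univ i₀), Function.update_self]
  congr 1
  exact Finset.prod_congr rfl fun i hi => by rw [Function.update_of_ne (Finset.ne_of_mem_erase hi)]

theorem piKronecker_mul [CommSemiring α] [DecidableEq ι] [Fintype n] (A : ι → Matrix m n α)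
    (B : ι → Matrix n p α) : piKronecker A * piKronecker B = piKronecker fun i => A i * B i := by
  ext x z
  simp only [mul_apply, piKronecker_apply, Fintype.prod_sum, ← Finset.prod_mul_distrib]

theorem conjTranspose_piKronecker [CommSemiring α] [StarRing α] (A : ι → Matrix m n α) :
    (piKronecker A)ᴴ = piKronecker fun i => (A i)ᴴ := by
  ext x y
  simp [star_prod]

theorem _root_.IsStarProjection.piKronecker [CommSemiring α] [StarRing α] [DecidableEq ι]
    [Fintype m] {A : ι → Matrix m m α} (hA : ∀ i, IsStarProjection (A i)) :
    IsStarProjection (piKronecker A) where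
  isIdempotentElem := by
    rw [IsIdempotentElem, piKronecker_mul]
    simp only [(hA _).isIdempotentElem.eq]
  isSelfAdjoint := by
    rw [IsSelfAdjoint, star_eq_conjTranspose, conjTranspose_piKronecker]
    simp only [← star_eq_conjTranspose, (hA _).isSelfAdjoint.star_eq]

theorem isStarProjection_vecMulVec_star [CommSemiring α] [StarRing α] [Fintype m]
    {v : m → α} (hv : star v ⬝ᵥ v = 1) : IsStarProjection (vecMulVec v (star v)) where
  isIdempotentElem := by rw [IsIdempotentElem, vecMulVec_mul_vecMulVec, hv, one_smul]
  isSelfAdjoint := by rw [IsSelfAdjoint, star_eq_conjTranspose, conjTranspose_vecMulVec, star_star]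

theorem linearMap_apply_eq_trace_mul [CommSemiring α] [Fintype n] [DecidableEq n]
    (L : Matrix n n α →ₗ[α] α) (B : Matrix n n α) :
    L B = trace (B * of fun b a => L (single a b 1)) := by
  conv_lhs => rw [matrix_eq_sum_single B]
  simp only [map_sum, trace, diag_apply, mul_apply, of_apply]
  refine Finset.sum_congr rfl fun a _ => Finset.sum_congr rfl fun b _ => ?_
  rw [← smul_eq_mul, ← L.map_smul, smul_single, smul_eq_mul, mul_one]

theorem star_dotProduct_mulVec_self [CommSemiring α] [StarRing α] [Fintype n] (M : Matrix n n α)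
    (v : n → α) : star (star v ⬝ᵥ M *ᵥ v) = star v ⬝ᵥ Mᴴ *ᵥ v := by
  rw [star_dotProduct, star_star, star_mulVec, dotProduct_mulVec]

theorem trace_vecMulVec_star_mul [CommSemiring α] [StarRing α] [Fintype n] (M : Matrix n n α)
    (w : n → α) : trace (vecMulVec w (star w) * M) = star w ⬝ᵥ M *ᵥ w := by
  rw [vecMulVec_mul, trace_vecMulVec, dotProduct_comm, dotProduct_mulVec]

def piKroneckerUpdateForm [CommSemiring α] [StarRing α] [Fintype n] [DecidableEq ι]
    (A : ι → Matrix n n α) (i₀ : ι) (v : (ι → n) → α) : Matrix n n α →ₗ[α] α where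
  toFun B := star v ⬝ᵥ piKronecker (Function.update A i₀ B) *ᵥ v
  map_add' B B' := by
    rw [← dotProduct_add, ← add_mulVec]
    congr 2
    ext x y
    simp only [piKronecker_update_apply, add_apply]
    ring
  map_smul' c B := by
    rw [RingHom.id_apply, ← dotProduct_smul, ← smul_mulVec]
    congr 2
    ext x y
    simp only [piKronecker_update_apply, smul_apply, smul_eq_mul]
    ring

variable {𝕜 : Type*} [RCLike 𝕜]

open scoped MatrixOrder in
theorem PosSemidef.piKronecker [Fintype n] {A : ι → Matrix n n 𝕜}
    (hA : ∀ i, (A i).PosSemidef) : (piKronecker A).PosSemidef := by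
  classical
  choose B hB using fun i => CStarAlgebra.nonneg_iff_eq_star_mul_self.mp (hA i).nonneg
  rw [show A = fun i => star (B i) * B i from funext hB, ← piKronecker_mul]
  simp only [star_eq_conjTranspose, ← conjTranspose_piKronecker]
  exact posSemidef_conjTranspose_mul_self _

open scoped MatrixOrder in
theorem _root_.IsStarProjection.posSemidef [Fintype n] [DecidableEq n] {P : Matrix n n 𝕜}
    (hP : IsStarProjection P) : P.PosSemidef :=
  nonneg_iff_posSemidef.mp hP.nonneg

open scoped MatrixOrder in
theorem _root_.IsStarProjection.dotProduct_mulVec_le [Fintype n] [DecidableEq n] {P : Matrix n n 𝕜}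
    (hP : IsStarProjection P) (v : n → 𝕜) : star v ⬝ᵥ P *ᵥ v ≤ star v ⬝ᵥ v := by
  have := (le_iff.mp hP.le_one).dotProduct_mulVec_nonneg v
  rwa [sub_mulVec, one_mulVec, dotProduct_sub, sub_nonneg] at this

/-- `R` is a partial trace of `|v⟩⟨v|` against the factors `A i`, `i ≠ i₀`. -/
theorem exists_posSemidef_dotProduct_piKronecker_update_mulVec_eq_trace [Fintype n]
    [DecidableEq ι] [DecidableEq n] {A : ι → Matrix n n 𝕜} {i₀ : ι}
    (hA : ∀ i ≠ i₀, (A i).PosSemidef) (v : (ι → n) → 𝕜) :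
    ∃ R : Matrix n n 𝕜, R.PosSemidef ∧
      ∀ B, star v ⬝ᵥ piKronecker (Function.update A i₀ B) *ᵥ v = trace (B * R) := by
  set L := piKroneckerUpdateForm A i₀ v
  have hL : ∀ B, L B = star v ⬝ᵥ piKronecker (Function.update A i₀ B) *ᵥ v := fun _ => rfl
  have hL_conjTranspose : ∀ B, L Bᴴ = star (L B) := by
    intro B
    rw [hL, hL, star_dotProduct_mulVec_self, conjTranspose_piKronecker]
    congr 3
    funext i
    rcases eq_or_ne i i₀ with rfl | hi
    · simp
    · simp [Function.update_of_ne hi, (hA i hi).isHermitian.eq]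
  refine ⟨of fun b a => L (single a b 1), .of_dotProduct_mulVec_nonneg ?_ fun w => ?_,
    linearMap_apply_eq_trace_mul L⟩
  · ext a b
    rw [conjTranspose_apply, of_apply, of_apply, ← hL_conjTranspose, conjTranspose_single,
      star_one]
  · rw [← trace_vecMulVec_star_mul, ← linearMap_apply_eq_trace_mul, hL]
    refine (PosSemidef.piKronecker fun i => ?_).dotProduct_mulVec_nonneg v
    rcases eq_or_ne i i₀ with rfl | hi
    · simpa using posSemidef_vecMulVec_self_star w
    · simpa [Function.update_of_ne hi] using hA i hi

end Matrix

open Matrix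

noncomputable def qubitProj (k : Fin 6) : Matrix (Fin 2) (Fin 2) ℂ :=
  vecMulVec (qs k) (star (qs k))

theorem ofReal_sqrt_two_inv_sq : ((√2 : ℝ) : ℂ)⁻¹ ^ 2 = 1 / 2 := by
  rw [inv_pow, ← Complex.ofReal_pow, Real.sq_sqrt zero_le_two]; norm_num

theorem star_qs_dotProduct_self (k : Fin 6) : star (qs k) ⬝ᵥ qs k = 1 := by
  fin_cases k <;>
    simp only [qs, dotProduct, Fin.sum_univ_two, Pi.star_apply, RCLike.star_def, Fin.isValue,
      cons_val_zero, cons_val_one, cons_val_fin_one, map_inv₀, map_neg, map_mul, map_one,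
      map_zero, Complex.conj_ofReal, Complex.conj_I] <;>
    ring_nf <;>
    simp only [ofReal_sqrt_two_inv_sq, Complex.I_sq] <;>
    norm_num

theorem isStarProjection_qubitProj (k : Fin 6) : IsStarProjection (qubitProj k) :=
  isStarProjection_vecMulVec_star (star_qs_dotProduct_self k)

/-- The six states form a 2-design: `∑ₖ ⟨vₖ|R|vₖ⟩² = (tr R)² + tr R²`, and
`tr R² = (tr R)² - 2 det R` for `2 × 2` matrices. -/
theorem sum_trace_qubitProj_mul_sq (R : Matrix (Fin 2) (Fin 2) ℂ) :
    ∑ k, trace (qubitProj k * R) ^ 2 = 2 * trace R ^ 2 - 2 * det R := by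
  have h4 : ((√2 : ℝ) : ℂ)⁻¹ ^ 4 = 1 / 4 := by
    rw [show 4 = 2 * 2 from rfl, pow_mul, ofReal_sqrt_two_inv_sq]; norm_num
  simp only [qubitProj, qs, vecMulVec_mul, trace_vecMulVec, dotProduct, vecMul, Pi.star_apply,
    RCLike.star_def, Fin.sum_univ_two, Fin.isValue, Fin.sum_univ_six, cons_val_zero, map_inv₀,
    Complex.conj_ofReal, cons_val_one, cons_val_fin_one, map_neg, neg_mul, map_mul,
    Complex.conj_I, neg_neg, map_one, one_mul, map_zero, zero_mul, add_zero, zero_add,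
    trace_fin_two, det_fin_two]
  ring_nf
  simp only [h4, Complex.I_sq, Complex.I_pow_four]
  ring

theorem sum_sq_dotProduct_piKronecker_update_qubitProj_le {ι : Type*} [Fintype ι] [DecidableEq ι]
    {A : ι → Matrix (Fin 2) (Fin 2) ℂ} {i₀ : ι} (hA : ∀ i ≠ i₀, (A i).PosSemidef)
    (v : (ι → Fin 2) → ℂ) :
    ∑ k, (star v ⬝ᵥ piKronecker (Function.update A i₀ (qubitProj k)) *ᵥ v) ^ 2 ≤
      2 * (star v ⬝ᵥ piKronecker (Function.update A i₀ 1) *ᵥ v) ^ 2 := by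
  obtain ⟨R, hR, hAR⟩ := exists_posSemidef_dotProduct_piKronecker_update_mulVec_eq_trace hA v
  simp only [hAR, one_mul, sum_trace_qubitProj_mul_sq]
  exact sub_le_self _ (mul_nonneg zero_le_two hR.det_nonneg)

theorem dotProduct_vecMulVec_star_mulVec {n 𝕜 : Type*} [Fintype n] [RCLike 𝕜] (ψ v : n → 𝕜) :
    star v ⬝ᵥ vecMulVec ψ (star ψ) *ᵥ v = (‖star v ⬝ᵥ ψ‖ : 𝕜) ^ 2 := by
  rw [vecMulVec_mulVec, op_smul_eq_smul, dotProduct_smul, smul_eq_mul,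
    star_dotProduct, ← RCLike.conj_mul]
  rfl

/-- On a mixed qubit this is `I₂`, unlike `qsDM 6 = I₂/2`. -/
noncomputable def pureFactor (k : Fin 7) : Matrix (Fin 2) (Fin 2) ℂ :=
  if k = 6 then 1 else qsDM k

theorem pureFactor_six : pureFactor 6 = 1 := if_pos rfl

theorem pureFactor_castSucc (k : Fin 6) : pureFactor k.castSucc = qubitProj k := by
  have hk : k.castSucc ≠ 6 := Fin.castSucc_ne_last k
  rw [pureFactor, if_neg hk, qsDM, dif_pos (show (k.castSucc : ℕ) < 6 from k.isLt)]
  rfl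

theorem isStarProjection_pureFactor (k : Fin 7) : IsStarProjection (pureFactor k) := by
  induction k using Fin.lastCases with
  | last => exact pureFactor_six ▸ .one _
  | cast k => exact pureFactor_castSucc k ▸ isStarProjection_qubitProj k

theorem pureProjA_eq_piKronecker {N : ℕ} (g : Fin N → Fin 7) :
    pureProjA g = piKronecker (pureFactor ∘ g) := by
  ext x y
  simp only [pureProjA, piKronecker_apply, of_apply]
  refine Finset.prod_congr rfl fun i _ => ?_
  rw [Function.comp_apply, pureFactor]
  split_ifs <;> simp_all [one_apply]

theorem isStarProjection_pureProjA {N : ℕ} (g : Fin N → Fin 7) :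
    IsStarProjection (pureProjA g) :=
  pureProjA_eq_piKronecker g ▸ .piKronecker fun i => isStarProjection_pureFactor (g i)

theorem pureProjA_castSucc_comp {N : ℕ} (f : Fin N → Fin 6) :
    pureProjA (Fin.castSucc ∘ f) = vecMulVec (prodState f) (star (prodState f)) := by
  ext x y
  simp [pureProjA_eq_piKronecker, pureFactor_castSucc, qubitProj, vecMulVec, prodState,
    Finset.prod_mul_distrib, star_prod]

section Srho

variable {N : ℕ} {g : Fin N → Fin 7}

theorem mem_Srho {f : Fin N → Fin 6} : f ∈ Srho g ↔ ∀ i, g i ≠ 6 → g i = (f i).castSucc := by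
  simp [Srho, Fin.ext_iff]

theorem exists_Srho_eq_singleton (h : nMix g = 0) :
    ∃ f₀, Srho g = {f₀} ∧ Fin.castSucc ∘ f₀ = g := by
  have hg : ∀ i, g i ≠ 6 := by simpa [nMix] using h
  refine ⟨fun i => (g i).castPred (hg i), ?_, funext fun i => Fin.castSucc_castPred _ _⟩
  ext f
  rw [mem_Srho, Finset.mem_singleton, funext_iff]
  refine forall_congr' fun i => ⟨fun hf => ?_, fun hf _ => ?_⟩
  · rw [← Fin.castSucc_inj, Fin.castSucc_castPred, hf (hg i)]
  · rw [hf, Fin.castSucc_castPred]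

theorem Srho_update_castSucc {i₀ : Fin N} (h₀ : g i₀ = 6) (k : Fin 6) :
    Srho (Function.update g i₀ k.castSucc) = {f ∈ Srho g | f i₀ = k} := by
  ext f
  simp only [Finset.mem_filter, mem_Srho]
  constructor
  · intro hf
    refine ⟨fun i hi => ?_, ?_⟩
    · have hi₀ : i ≠ i₀ := by rintro rfl; exact hi h₀
      rw [← Function.update_of_ne hi₀ k.castSucc g] at hi ⊢
      exact hf i hi
    · simpa using (hf i₀ (by simpa using Fin.castSucc_ne_last k)).symm
  · rintro ⟨hf, rfl⟩ i
    rcases eq_or_ne i i₀ with rfl | hi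
    · simp
    · simpa [Function.update_of_ne hi] using hf i

theorem nMix_update_castSucc {i₀ : Fin N} (h₀ : g i₀ = 6) (k : Fin 6) :
    nMix (Function.update g i₀ k.castSucc) + 1 = nMix g := by
  have : (Finset.univ.filter fun i => Function.update g i₀ k.castSucc i = 6) =
      (Finset.univ.filter fun i => g i = 6).erase i₀ := by
    ext i
    rcases eq_or_ne i i₀ with rfl | hi
    · simpa using Fin.castSucc_ne_last k
    · simp [hi]
  rw [nMix, nMix, this, Finset.card_erase_add_one (by simpa using h₀)]

end Srho

theorem sum_sq_pureProjA_update_castSucc_le {N : ℕ} {g : Fin N → Fin 7} {i₀ : Fin N}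
    (h₀ : g i₀ = 6) (j : (Fin N → Fin 2) → ℂ) :
    ∑ k : Fin 6, (star j ⬝ᵥ pureProjA (Function.update g i₀ k.castSucc) *ᵥ j) ^ 2 ≤
      2 * (star j ⬝ᵥ pureProjA g *ᵥ j) ^ 2 := by
  conv_rhs => rw [← Function.update_eq_self i₀ g, h₀]
  simp only [pureProjA_eq_piKronecker, Function.comp_update, pureFactor_castSucc, pureFactor_six]
  exact sum_sq_dotProduct_piKronecker_update_qubitProj_le
    (fun i _ => (isStarProjection_pureFactor (g i)).posSemidef) j

theorem sum_Srho_sq_le {N : ℕ} (j : (Fin N → Fin 2) → ℂ) (g : Fin N → Fin 7) :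
    ∑ f ∈ Srho g, (star j ⬝ᵥ pureProjA (Fin.castSucc ∘ f) *ᵥ j) ^ 2 ≤
      2 ^ nMix g * (star j ⬝ᵥ pureProjA g *ᵥ j) ^ 2 := by
  induction hn : nMix g generalizing g with
  | zero =>
    obtain ⟨f₀, hS, hf₀⟩ := exists_Srho_eq_singleton hn
    simp [hS, hf₀]
  | succ n ih =>
    obtain ⟨i₀, h₀⟩ : ∃ i₀, g i₀ = 6 := by
      simpa [Finset.Nonempty] using Finset.card_pos.mp (hn ▸ n.succ_pos : 0 < nMix g)
    calc ∑ f ∈ Srho g, (star j ⬝ᵥ pureProjA (Fin.castSucc ∘ f) *ᵥ j) ^ 2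
        = ∑ k : Fin 6, ∑ f ∈ Srho (Function.update g i₀ k.castSucc),
            (star j ⬝ᵥ pureProjA (Fin.castSucc ∘ f) *ᵥ j) ^ 2 := by
          simp only [Srho_update_castSucc h₀]
          exact (Finset.sum_fiberwise _ _ _).symm
      _ ≤ ∑ k : Fin 6, 2 ^ n * (star j ⬝ᵥ pureProjA (Function.update g i₀ k.castSucc) *ᵥ j) ^ 2 :=
          Finset.sum_le_sum fun k _ => ih _ (by have := nMix_update_castSucc h₀ k; omega)
      _ ≤ 2 ^ n * (2 * (star j ⬝ᵥ pureProjA g *ᵥ j) ^ 2) := by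
          rw [← Finset.mul_sum]
          exact mul_le_mul_of_nonneg_left (sum_sq_pureProjA_update_castSucc_le h₀ j)
            (pow_nonneg zero_le_two n)
      _ = 2 ^ (n + 1) * (star j ⬝ᵥ pureProjA g *ᵥ j) ^ 2 := by ring

/-- For `ρ ∈ S^+` and every unit vector `|j⟩ ∈ (ℂ²)^{⊗N}`,
`Σ_{|ψ⟩∈S_ρ} |⟨j|ψ⟩|⁴ ≤ 2^{n(ρ)} ⟨j| (|φ⟩_A⟨φ|_A ⊗ I_Ā) |j⟩`. -/
theorem sum_quartic_overlap_le (N : ℕ) (g : Fin N → Fin 7)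
    (j : (Fin N → Fin 2) → ℂ) (hj : star j ⬝ᵥ j = 1) :
    ∑ f ∈ Srho g, ‖star j ⬝ᵥ prodState f‖ ^ 4
      ≤ 2 ^ nMix g * (star j ⬝ᵥ (pureProjA g).mulVec j).re := by
  set Q := star j ⬝ᵥ pureProjA g *ᵥ j
  have hQ_nonneg : 0 ≤ Q := (isStarProjection_pureProjA g).posSemidef.dotProduct_mulVec_nonneg j
  have hQ_le_one : Q ≤ 1 := hj ▸ (isStarProjection_pureProjA g).dotProduct_mulVec_le j
  have key : ((∑ f ∈ Srho g, ‖star j ⬝ᵥ prodState f‖ ^ 4 : ℝ) : ℂ) ≤ 2 ^ nMix g * Q :=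
    calc ((∑ f ∈ Srho g, ‖star j ⬝ᵥ prodState f‖ ^ 4 : ℝ) : ℂ)
        = ∑ f ∈ Srho g, (star j ⬝ᵥ pureProjA (Fin.castSucc ∘ f) *ᵥ j) ^ 2 := by
          push_cast
          simp only [pureProjA_castSucc_comp, dotProduct_vecMulVec_star_mulVec, ← pow_mul]
          norm_num
      _ ≤ 2 ^ nMix g * Q ^ 2 := sum_Srho_sq_le j g
      _ ≤ 2 ^ nMix g * Q :=
          mul_le_mul_of_nonneg_left (pow_le_of_le_one hQ_nonneg hQ_le_one two_ne_zero)
            (pow_nonneg zero_le_two _)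
  have h := (Complex.le_def.mp key).1
  rwa [Complex.ofReal_re, show (2 : ℂ) ^ nMix g = ((2 ^ nMix g : ℝ) : ℂ) by push_cast; rfl,
    Complex.re_ofReal_mul] at h
end

section
/- Let p be a probability distribution on S^+, and suppose that for some m ∈ ℕ and ε ∈ [0,1], Σ_{ρ∈S^+ : n(ρ) ≥ m} p(ρ) ≥ 1 − ε. Let 𝓔 be the distribution on S obtained by first sampling ρ ∈ S^+ with probability p(ρ) and then sampling |ψ⟩ uniformly from S_ρ. Then for any orthonormal basis {|j⟩}_{j=1}^{2^N} of (ℂ²)^{⊗N}, E_{|ψ⟩∼𝓔} Σ_{j=1}^{2^N} |⟨j|ψ⟩|⁴ ≤ ε + (2/3)^m, i.e., E_{|ψ⟩∼𝓔} 1/D^eff_ψ ≤ ε + (2/3)^m. -/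
open scoped Matrix ComplexConjugate

/-!
Fix `ρ` with `n = n(ρ)` mixed qubits and let `M_p(v) = ∑_{ψ ∈ S_ρ} |⟨v|ψ⟩|^p`. The six
single-qubit states form a 2-design: for vectors `α, β` the numbers
`r_k = ‖q_k(0) α + q_k(1) β‖²` satisfy `∑ r_k = 3 (‖α‖² + ‖β‖²)` and
`∑ r_k² = (‖α‖² + ‖β‖²)² + ‖α‖⁴ + ‖β‖⁴ + 2 |⟨α, β⟩|² ≤ 2 (‖α‖² + ‖β‖²)²`.
Splitting off one qubit at a time, a pure qubit just contracts `v` with its state, while a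
mixed one sums over the six contractions; induction then gives `M_2(v) ≤ 3ⁿ ‖v‖²` and
`9ⁿ M_4(v) ≤ 2ⁿ M_2(v)²`, hence `M_4(v) ≤ (2/3)ⁿ ‖v‖² M_2(v)`. For an orthonormal basis
`(b_j)`, Parseval gives `∑_j M_2(b_j) = |S_ρ| = 6ⁿ`, so `∑_j M_4(b_j) ≤ 4ⁿ`: the average over
`S_ρ` is at most `(2/3)ⁿ`. Averaging over `ρ`, the `ρ` with `n(ρ) ≥ m` contribute at most
`(2/3)^m` and the others, of total weight at most `ε`, at most `1`.
-/

open Finset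

theorem sum_norm_sq_dotProduct_of_orthonormal {ι : Type*} [Fintype ι] [DecidableEq ι]
    (b : ι → ι → ℂ) (hb : ∀ j k, star (b j) ⬝ᵥ b k = if j = k then 1 else 0) (w : ι → ℂ) :
    ∑ j, ‖star (b j) ⬝ᵥ w‖ ^ 2 = ∑ x, ‖w x‖ ^ 2 := by
  let v : ι → EuclideanSpace ℂ ι := fun j => WithLp.toLp 2 (b j)
  have hv : Orthonormal ℂ v := by
    rw [orthonormal_iff_ite]
    intro j k
    rw [EuclideanSpace.inner_toLp_toLp, dotProduct_comm, hb]
  have hspan := hv.linearIndependent.span_eq_top_of_card_eq_finrank'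
    (finrank_euclideanSpace (𝕜 := ℂ) (ι := ι)).symm
  have := (OrthonormalBasis.mk hv hspan.ge).sum_sq_norm_inner_right (WithLp.toLp 2 w)
  simpa [v, EuclideanSpace.inner_toLp_toLp, dotProduct_comm, EuclideanSpace.norm_sq_eq] using this

theorem sum_pi_fin_succ {M α : Type*} [AddCommMonoid M] [Fintype α] {N : ℕ}
    (F : (Fin (N + 1) → α) → M) : ∑ x, F x = ∑ a, ∑ y, F (Fin.cons a y) := by
  rw [← Fintype.sum_prod_type']
  exact (Fintype.sum_equiv (Fin.consEquiv fun _ => α) _ _ fun _ => rfl).symm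

section SingleQubit

variable {E : Type*} [NormedAddCommGroup E] [InnerProductSpace ℂ E]

theorem norm_sq_qs_smul_add (k : Fin 6) (α β : E) :
    ‖qs k 0 • α + qs k 1 • β‖ ^ 2 =
      ![(‖α‖ ^ 2 + ‖β‖ ^ 2) / 2 + (inner ℂ α β).re, (‖α‖ ^ 2 + ‖β‖ ^ 2) / 2 - (inner ℂ α β).re,
        (‖α‖ ^ 2 + ‖β‖ ^ 2) / 2 - (inner ℂ α β).im, (‖α‖ ^ 2 + ‖β‖ ^ 2) / 2 + (inner ℂ α β).im,
        ‖α‖ ^ 2, ‖β‖ ^ 2] k := by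
  have h2 : ((Real.sqrt 2 : ℂ)⁻¹) * (Real.sqrt 2 : ℂ)⁻¹ = 2⁻¹ := by
    rw [← mul_inv, ← Complex.ofReal_mul, Real.mul_self_sqrt zero_le_two]; norm_num
  rw [@norm_add_sq ℂ, norm_smul, norm_smul, inner_smul_left, inner_smul_right]
  fin_cases k <;> simp [qs, mul_pow, h2, ← mul_assoc] <;> ring_nf <;> norm_num <;> ring

theorem sum_norm_sq_qs_smul_add (α β : E) :
    ∑ k, ‖qs k 0 • α + qs k 1 • β‖ ^ 2 = 3 * (‖α‖ ^ 2 + ‖β‖ ^ 2) := by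
  simp only [Fin.sum_univ_six, norm_sq_qs_smul_add, Matrix.cons_val]
  ring

theorem norm_sq_qs_smul_add_le (k : Fin 6) (α β : E) :
    ‖qs k 0 • α + qs k 1 • β‖ ^ 2 ≤ ‖α‖ ^ 2 + ‖β‖ ^ 2 := by
  have hz : ‖inner ℂ α β‖ ≤ (‖α‖ ^ 2 + ‖β‖ ^ 2) / 2 := by
    nlinarith [norm_inner_le_norm (𝕜 := ℂ) α β, two_mul_le_add_sq ‖α‖ ‖β‖]
  have hre := abs_le.mp ((Complex.abs_re_le_norm (inner ℂ α β)).trans hz)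
  have him := abs_le.mp ((Complex.abs_im_le_norm (inner ℂ α β)).trans hz)
  rw [norm_sq_qs_smul_add]
  fin_cases k <;> simp <;> linarith

theorem sum_sq_norm_sq_qs_smul_add_le (α β : E) :
    ∑ k, (‖qs k 0 • α + qs k 1 • β‖ ^ 2) ^ 2 ≤ 2 * (‖α‖ ^ 2 + ‖β‖ ^ 2) ^ 2 := by
  have hz : (inner ℂ α β).re ^ 2 + (inner ℂ α β).im ^ 2 ≤ ‖α‖ ^ 2 * ‖β‖ ^ 2 := by
    rw [← mul_pow, sq, sq, ← Complex.normSq_apply, ← Complex.sq_norm]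
    exact pow_le_pow_left₀ (norm_nonneg _) (norm_inner_le_norm α β) 2
  simp only [Fin.sum_univ_six, norm_sq_qs_smul_add, Matrix.cons_val]
  nlinarith

end SingleQubit

theorem norm_sq_qs_add (k : Fin 6) : ‖qs k 0‖ ^ 2 + ‖qs k 1‖ ^ 2 = 1 := by
  fin_cases k <;> simp [qs] <;> norm_num

section Qubits

variable {N : ℕ}

theorem sum_norm_sq_prodState (f : Fin N → Fin 6) : ∑ x, ‖prodState f x‖ ^ 2 = 1 := by
  simp only [prodState, norm_prod, ← prod_pow]
  rw [← Fintype.prod_sum (fun i a => ‖qs (f i) a‖ ^ 2)]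
  simp [Fin.sum_univ_two, norm_sq_qs_add]

/- In `Fin 7`, the last index `Fin.last 6 = 6` stands for the mixed factor `I₂/2` and
`k.castSucc` for the pure state `qs k`. -/

theorem sum_Srho_cons {M : Type*} [AddCommMonoid M] (c : Fin 7) (g : Fin N → Fin 7)
    (F : (Fin (N + 1) → Fin 6) → M) :
    ∑ f ∈ Srho (Fin.cons c g), F f =
      ∑ k ∈ univ.filter (fun k : Fin 6 => c ≠ 6 → (c : ℕ) = k), ∑ f ∈ Srho g, F (Fin.cons k f) := by
  simp only [Srho, sum_filter, Fin.forall_fin_succ, ite_and]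
  rw [sum_pi_fin_succ]
  simp only [Fin.cons_zero, Fin.cons_succ, ite_sum_zero]

theorem sum_Srho_cons_castSucc {M : Type*} [AddCommMonoid M] (k : Fin 6) (g : Fin N → Fin 7)
    (F : (Fin (N + 1) → Fin 6) → M) :
    ∑ f ∈ Srho (Fin.cons k.castSucc g), F f = ∑ f ∈ Srho g, F (Fin.cons k f) := by
  have h6 : k.castSucc ≠ (6 : Fin 7) := Fin.castSucc_ne_last k
  have hk : univ.filter (fun k' : Fin 6 => k.castSucc ≠ 6 → (k.castSucc : ℕ) = k') = {k} := by
    ext k'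
    simp [h6, Fin.ext_iff, eq_comm]
  rw [sum_Srho_cons, hk, sum_singleton]

theorem sum_Srho_cons_last {M : Type*} [AddCommMonoid M] (g : Fin N → Fin 7)
    (F : (Fin (N + 1) → Fin 6) → M) :
    ∑ f ∈ Srho (Fin.cons (Fin.last 6) g), F f = ∑ k, ∑ f ∈ Srho g, F (Fin.cons k f) := by
  rw [sum_Srho_cons]
  simp

theorem nMix_cons (c : Fin 7) (g : Fin N → Fin 7) :
    nMix (Fin.cons c g : Fin (N + 1) → Fin 7) = nMix g + if c = 6 then 1 else 0 := by
  simp only [nMix, card_filter, Fin.sum_univ_succ, Fin.cons_zero, Fin.cons_succ, add_comm]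

theorem nMix_cons_castSucc (k : Fin 6) (g : Fin N → Fin 7) :
    nMix (Fin.cons k.castSucc g : Fin (N + 1) → Fin 7) = nMix g := by
  rw [nMix_cons, if_neg (show k.castSucc ≠ (6 : Fin 7) from Fin.castSucc_ne_last k), add_zero]

theorem nMix_cons_last (g : Fin N → Fin 7) :
    nMix (Fin.cons (Fin.last 6) g : Fin (N + 1) → Fin 7) = nMix g + 1 := by
  rw [nMix_cons, if_pos (show Fin.last 6 = (6 : Fin 7) from rfl)]

theorem nMix_fin_zero (g : Fin 0 → Fin 7) : nMix g = 0 := by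
  simp [nMix]

theorem card_Srho (g : Fin N → Fin 7) : (Srho g).card = 6 ^ nMix g := by
  induction N with
  | zero => simp [Srho, nMix_fin_zero]
  | succ N ih =>
    induction g using Fin.consCases with | cons c g => ?_
    obtain ⟨k, rfl⟩ | rfl := Fin.eq_castSucc_or_eq_last c
    · rw [card_eq_sum_ones, sum_Srho_cons_castSucc, ← card_eq_sum_ones, ih, nMix_cons_castSucc]
    · rw [card_eq_sum_ones, sum_Srho_cons_last, nMix_cons_last, pow_succ']
      simp [ih]

/-- The partial inner product `(⟨q_k| ⊗ 1) v` on the first qubit. -/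
noncomputable def contractFirst (k : Fin 6) (v : (Fin (N + 1) → Fin 2) → ℂ) :
    (Fin N → Fin 2) → ℂ :=
  conj (qs k 0) • (fun y => v (Fin.cons 0 y)) + conj (qs k 1) • (fun y => v (Fin.cons 1 y))

theorem dotProduct_prodState_cons (v : (Fin (N + 1) → Fin 2) → ℂ) (k : Fin 6)
    (f : Fin N → Fin 6) :
    star v ⬝ᵥ prodState (Fin.cons k f) = star (contractFirst k v) ⬝ᵥ prodState f := by
  rw [dotProduct, sum_pi_fin_succ, Fin.sum_univ_two]
  simp [dotProduct, contractFirst, prodState, Fin.prod_univ_succ, sum_add_distrib, mul_assoc,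
    mul_left_comm, add_mul]

theorem sum_norm_sq_contractFirst_le (k : Fin 6) (v : (Fin (N + 1) → Fin 2) → ℂ) :
    ∑ y, ‖contractFirst k v y‖ ^ 2 ≤ ∑ x, ‖v x‖ ^ 2 := by
  rw [sum_pi_fin_succ, Fin.sum_univ_two, ← sum_add_distrib]
  refine sum_le_sum fun y _ => ?_
  have := norm_sq_qs_smul_add_le k (conj (v (Fin.cons 0 y))) (conj (v (Fin.cons 1 y)))
  rw [← Complex.norm_conj (contractFirst k v y)]
  simpa [contractFirst] using this

theorem sum_sum_norm_sq_contractFirst (v : (Fin (N + 1) → Fin 2) → ℂ) :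
    ∑ k, ∑ y, ‖contractFirst k v y‖ ^ 2 = 3 * ∑ x, ‖v x‖ ^ 2 := by
  rw [sum_pi_fin_succ, Fin.sum_univ_two, ← sum_add_distrib, sum_comm, mul_sum]
  refine sum_congr rfl fun y _ => ?_
  have := sum_norm_sq_qs_smul_add (conj (v (Fin.cons 0 y))) (conj (v (Fin.cons 1 y)))
  simp_rw [← Complex.norm_conj (contractFirst _ v y)]
  simpa [contractFirst] using this

noncomputable def overlapMoment (g : Fin N → Fin 7) (p : ℕ) (v : (Fin N → Fin 2) → ℂ) : ℝ :=
  ∑ f ∈ Srho g, ‖star v ⬝ᵥ prodState f‖ ^ p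

noncomputable def overlapVec (g : Fin N → Fin 7) (v : (Fin N → Fin 2) → ℂ) :
    EuclideanSpace ℂ (Srho g) :=
  WithLp.toLp 2 fun f => star v ⬝ᵥ prodState f.1

theorem overlapMoment_two_eq (g : Fin N → Fin 7) (v : (Fin N → Fin 2) → ℂ) :
    overlapMoment g 2 v = ‖overlapVec g v‖ ^ 2 := by
  rw [EuclideanSpace.norm_sq_eq, overlapMoment, ← sum_coe_sort]
  rfl

theorem overlapVec_contractFirst (g : Fin N → Fin 7) (k : Fin 6)
    (v : (Fin (N + 1) → Fin 2) → ℂ) :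
    overlapVec g (contractFirst k v) = qs k 0 • overlapVec g (fun y => v (Fin.cons 0 y)) +
      qs k 1 • overlapVec g (fun y => v (Fin.cons 1 y)) := by
  ext f
  simp [overlapVec, contractFirst, add_dotProduct, smul_dotProduct, star_add, star_smul]

theorem overlapMoment_cons_castSucc (k : Fin 6) (g : Fin N → Fin 7) (p : ℕ)
    (v : (Fin (N + 1) → Fin 2) → ℂ) :
    overlapMoment (Fin.cons k.castSucc g) p v = overlapMoment g p (contractFirst k v) := by
  simp only [overlapMoment, sum_Srho_cons_castSucc, dotProduct_prodState_cons]

theorem overlapMoment_cons_last (g : Fin N → Fin 7) (p : ℕ) (v : (Fin (N + 1) → Fin 2) → ℂ) :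
    overlapMoment (Fin.cons (Fin.last 6) g) p v = ∑ k, overlapMoment g p (contractFirst k v) := by
  simp only [overlapMoment, sum_Srho_cons_last, dotProduct_prodState_cons]

theorem overlapMoment_fin_zero (g : Fin 0 → Fin 7) (p : ℕ) (v : (Fin 0 → Fin 2) → ℂ)
    (x : Fin 0 → Fin 2) : overlapMoment g p v = ‖v x‖ ^ p := by
  have hS : Srho g = univ := filter_true_of_mem fun f _ i => i.elim0
  rw [overlapMoment, hS, Fintype.sum_unique, dotProduct,
    Fintype.sum_eq_single x fun y hy => absurd (Subsingleton.elim y x) hy]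
  simp [prodState]

theorem overlapMoment_two_le (g : Fin N → Fin 7) (v : (Fin N → Fin 2) → ℂ) :
    overlapMoment g 2 v ≤ 3 ^ nMix g * ∑ x, ‖v x‖ ^ 2 := by
  induction N with
  | zero => 
    rw [nMix_fin_zero, pow_zero, one_mul, Fintype.sum_unique, overlapMoment_fin_zero g 2 v]
  | succ N ih =>
    induction g using Fin.consCases with | cons c g => ?_
    obtain ⟨k, rfl⟩ | rfl := Fin.eq_castSucc_or_eq_last c
    · rw [overlapMoment_cons_castSucc, nMix_cons_castSucc]
      exact (ih g _).trans (by gcongr; exact sum_norm_sq_contractFirst_le k v)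
    · rw [overlapMoment_cons_last, nMix_cons_last, pow_succ, mul_assoc,
        ← sum_sum_norm_sq_contractFirst, mul_sum]
      exact sum_le_sum fun k _ => ih g _

theorem sum_sq_overlapMoment_two_contractFirst_le (g : Fin N → Fin 7)
    (v : (Fin (N + 1) → Fin 2) → ℂ) :
    9 * ∑ k, overlapMoment g 2 (contractFirst k v) ^ 2 ≤
      2 * (∑ k, overlapMoment g 2 (contractFirst k v)) ^ 2 := by
  simp only [overlapMoment_two_eq, overlapVec_contractFirst, sum_norm_sq_qs_smul_add]
  nlinarith [sum_sq_norm_sq_qs_smul_add_le (overlapVec g (fun y => v (Fin.cons 0 y)))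
    (overlapVec g (fun y => v (Fin.cons 1 y)))]

theorem overlapMoment_four_le (g : Fin N → Fin 7) (v : (Fin N → Fin 2) → ℂ) :
    9 ^ nMix g * overlapMoment g 4 v ≤ 2 ^ nMix g * overlapMoment g 2 v ^ 2 := by
  induction N with
  | zero => simp [overlapMoment_fin_zero g _ v default, nMix_fin_zero, ← pow_mul]
  | succ N ih =>
    induction g using Fin.consCases with | cons c g => ?_
    obtain ⟨k, rfl⟩ | rfl := Fin.eq_castSucc_or_eq_last c
    · rw [overlapMoment_cons_castSucc, overlapMoment_cons_castSucc, nMix_cons_castSucc]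
      exact ih g _
    · rw [overlapMoment_cons_last, overlapMoment_cons_last, nMix_cons_last]
      calc 9 ^ (nMix g + 1) * ∑ k, overlapMoment g 4 (contractFirst k v)
          = 9 * ∑ k, 9 ^ nMix g * overlapMoment g 4 (contractFirst k v) := by
            rw [mul_sum, mul_sum]
            exact sum_congr rfl fun _ _ => by ring
        _ ≤ 9 * ∑ k, 2 ^ nMix g * overlapMoment g 2 (contractFirst k v) ^ 2 := by
            gcongr 9 * ∑ k, ?_ with k
            exact ih g _
        _ ≤ 2 ^ (nMix g + 1) * (∑ k, overlapMoment g 2 (contractFirst k v)) ^ 2 := by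
            rw [← mul_sum, pow_succ]
            nlinarith [sum_sq_overlapMoment_two_contractFirst_le g v,
              pow_pos (two_pos (α := ℝ)) (nMix g)]

theorem overlapMoment_four_le_mul (g : Fin N → Fin 7) (v : (Fin N → Fin 2) → ℂ) :
    overlapMoment g 4 v ≤ (2 / 3) ^ nMix g * (∑ x, ‖v x‖ ^ 2) * overlapMoment g 2 v := by
  rw [← mul_le_mul_iff_of_pos_left (by positivity : (0 : ℝ) < 9 ^ nMix g)]
  calc 9 ^ nMix g * overlapMoment g 4 v ≤ 2 ^ nMix g * overlapMoment g 2 v ^ 2 :=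
        overlapMoment_four_le g v
    _ ≤ 2 ^ nMix g * (overlapMoment g 2 v * (3 ^ nMix g * ∑ x, ‖v x‖ ^ 2)) := by
        rw [sq]
        gcongr
        · exact sum_nonneg fun _ _ => by positivity
        · exact overlapMoment_two_le g v
    _ = 9 ^ nMix g * ((2 / 3) ^ nMix g * (∑ x, ‖v x‖ ^ 2) * overlapMoment g 2 v) := by
        rw [show (9 : ℝ) = 3 * 3 by norm_num, mul_pow, div_pow]
        field_simp

theorem sum_overlapMoment_two_of_orthonormal (b : (Fin N → Fin 2) → (Fin N → Fin 2) → ℂ)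
    (hb : ∀ j k, star (b j) ⬝ᵥ b k = if j = k then 1 else 0) (g : Fin N → Fin 7) :
    ∑ j, overlapMoment g 2 (b j) = 6 ^ nMix g := by
  simp only [overlapMoment]
  rw [sum_comm]
  simp [sum_norm_sq_dotProduct_of_orthonormal b hb, sum_norm_sq_prodState, card_Srho]

theorem sum_overlap_pow_four_le (b : (Fin N → Fin 2) → (Fin N → Fin 2) → ℂ)
    (hb : ∀ j k, star (b j) ⬝ᵥ b k = if j = k then 1 else 0) (g : Fin N → Fin 7) :
    ∑ f ∈ Srho g, ∑ j, ‖star (b j) ⬝ᵥ prodState f‖ ^ 4 ≤ 4 ^ nMix g := by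
  have hunit : ∀ j, ∑ x, ‖b j x‖ ^ 2 = 1 := fun j => by
    simpa [hb, apply_ite (fun z : ℂ => ‖z‖ ^ 2)] using
      (sum_norm_sq_dotProduct_of_orthonormal b hb (b j)).symm
  calc ∑ f ∈ Srho g, ∑ j, ‖star (b j) ⬝ᵥ prodState f‖ ^ 4 = ∑ j, overlapMoment g 4 (b j) :=
        sum_comm
    _ ≤ ∑ j, (2 / 3) ^ nMix g * overlapMoment g 2 (b j) := sum_le_sum fun j _ => by
        simpa [hunit j] using overlapMoment_four_le_mul g (b j)
    _ = 4 ^ nMix g := by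
        rw [← mul_sum, sum_overlapMoment_two_of_orthonormal b hb, ← mul_pow]
        norm_num

end Qubits

theorem sum_mul_le_of_sum_filter_ge {ι : Type*} [Fintype ι] (p Q : ι → ℝ) (P : ι → Prop)
    [DecidablePred P] {ε c : ℝ} (hp0 : ∀ i, 0 ≤ p i) (hp1 : ∑ i, p i = 1)
    (hP : 1 - ε ≤ ∑ i ∈ univ.filter P, p i) (hc : 0 ≤ c) (hQ1 : ∀ i, Q i ≤ 1)
    (hQc : ∀ i, P i → Q i ≤ c) :
    ∑ i, p i * Q i ≤ ε + c := by
  rw [← sum_filter_add_sum_filter_not univ P] at hp1 ⊢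
  have hgood : ∑ i ∈ univ.filter P, p i * Q i ≤ (∑ i ∈ univ.filter P, p i) * c := by
    rw [sum_mul]
    exact sum_le_sum fun i hi => mul_le_mul_of_nonneg_left (hQc i (mem_filter.mp hi).2) (hp0 i)
  have hbad : ∑ i ∈ univ.filter (¬P ·), p i * Q i ≤ ∑ i ∈ univ.filter (¬P ·), p i :=
    sum_le_sum fun i _ => mul_le_of_le_one_right (hp0 i) (hQ1 i)
  have hbad0 : 0 ≤ ∑ i ∈ univ.filter (¬P ·), p i := sum_nonneg fun i _ => hp0 i
  have hgood' : (∑ i ∈ univ.filter P, p i) * c ≤ c := mul_le_of_le_one_left hc (by linarith)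
  linarith

theorem expected_inverse_effective_dimension_le_general (N : ℕ)
    (p : (Fin N → Fin 7) → ℝ) (hp0 : ∀ g, 0 ≤ p g) (hp1 : ∑ g, p g = 1)
    (m : ℕ) (ε : ℝ)
    (hm : 1 - ε ≤ ∑ g ∈ Finset.univ.filter fun g : Fin N → Fin 7 => m ≤ nMix g, p g)
    (b : (Fin N → Fin 2) → ((Fin N → Fin 2) → ℂ))
    (hb : ∀ j k, star (b j) ⬝ᵥ b k = if j = k then 1 else 0) :
    ∑ g : Fin N → Fin 7, p g * (((6 : ℝ) ^ nMix g)⁻¹ *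
        ∑ f ∈ Srho g, ∑ j : Fin N → Fin 2, ‖star (b j) ⬝ᵥ prodState f‖ ^ 4)
      ≤ ε + (2 / 3 : ℝ) ^ m := by
  have hQ : ∀ g, ((6 : ℝ) ^ nMix g)⁻¹ *
      ∑ f ∈ Srho g, ∑ j, ‖star (b j) ⬝ᵥ prodState f‖ ^ 4 ≤ (2 / 3) ^ nMix g := fun g => by
    rw [inv_mul_le_iff₀ (by positivity), ← mul_pow, show (6 : ℝ) * (2 / 3) = 4 by norm_num]
    exact sum_overlap_pow_four_le b hb g
  refine sum_mul_le_of_sum_filter_ge p _ _ hp0 hp1 hm (by positivity) (fun g => ?_)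
    (fun g hg => ?_)
  · exact (hQ g).trans (pow_le_one₀ (by norm_num) (by norm_num))
  · exact (hQ g).trans (pow_le_pow_of_le_one (by norm_num) (by norm_num) hg)

/-- Let `p` be a probability distribution on `S^+` with `Σ_{ρ : n(ρ) ≥ m} p(ρ) ≥ 1 − ε`,
and let `𝓔` be the distribution on `S` obtained by sampling `ρ ∼ p` and then sampling
`|ψ⟩` uniformly from `S_ρ` (recall `|S_ρ| = 6^{n(ρ)}`). Then for any orthonormal basis
`{|j⟩}` of `(ℂ²)^{⊗N}`, `E_{|ψ⟩∼𝓔} Σ_j |⟨j|ψ⟩|⁴ ≤ ε + (2/3)^m`. -/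
theorem expected_inverse_effective_dimension_le (N : ℕ)
    (p : (Fin N → Fin 7) → ℝ) (hp0 : ∀ g, 0 ≤ p g) (hp1 : ∑ g, p g = 1)
    (m : ℕ) (ε : ℝ) (hε : ε ∈ Set.Icc (0 : ℝ) 1)
    (hm : 1 - ε ≤ ∑ g ∈ Finset.univ.filter fun g : Fin N → Fin 7 => m ≤ nMix g, p g)
    (b : (Fin N → Fin 2) → ((Fin N → Fin 2) → ℂ))
    (hb : ∀ j k, star (b j) ⬝ᵥ b k = if j = k then 1 else 0) :
    ∑ g : Fin N → Fin 7, p g * (((6 : ℝ) ^ nMix g)⁻¹ *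
        ∑ f ∈ Srho g, ∑ j : Fin N → Fin 2, ‖star (b j) ⬝ᵥ prodState f‖ ^ 4)
      ≤ ε + (2 / 3 : ℝ) ^ m :=
  expected_inverse_effective_dimension_le_general N p hp0 hp1 m ε hm b hb
end

section
/- For any Hermitian matrix H on (ℂ²)^{⊗N} and any ρ ∈ S^+, the average over |ψ⟩ ∈ S_ρ of ⟨ψ|H|ψ⟩ equals tr(ρH); consequently, there exists |ψ⟩ ∈ S_ρ ⊆ S with ⟨ψ|H|ψ⟩ ≤ tr(ρH). -/
open scoped Matrix ComplexConjugate

lemma sqrt2_inv_sq : ((Real.sqrt 2 : ℂ)⁻¹) * ((Real.sqrt 2 : ℂ)⁻¹) = (2:ℂ)⁻¹ := by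
  rw [← mul_inv]
  norm_cast
  rw [Real.mul_self_sqrt (by norm_num)]; norm_num

lemma qs_sum (a b : Fin 2) : ∑ j : Fin 6, qs j a * (starRingEnd ℂ) (qs j b)
    = 6 * ((2:ℂ)⁻¹ • (1 : Matrix (Fin 2) (Fin 2) ℂ)) a b := by
  fin_cases a <;> fin_cases b <;>
    simp [qs, Fin.sum_univ_six, Matrix.one_apply, Complex.ext_iff, map_inv₀] <;>
    ring_nf <;>
    simp [Complex.ext_iff, sqrt2_inv_sq] <;> ring_nf

def tset (k : Fin 7) : Finset (Fin 6) :=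
  if h : (k : ℕ) < 6 then {⟨k, h⟩} else Finset.univ

lemma tset_nonempty (k : Fin 7) : (tset k).Nonempty := by
  unfold tset; split <;> simp

lemma key (k : Fin 7) (a b : Fin 2) :
    ∑ j ∈ tset k, qs j a * (starRingEnd ℂ) (qs j b) = ((tset k).card : ℂ) * qsDM k a b := by
  unfold tset qsDM
  by_cases h : (k : ℕ) < 6
  · simp [dif_pos h]
  · rw [dif_neg h, dif_neg h]
    simpa using qs_sum a b

lemma Srho_eq {N : ℕ} (g : Fin N → Fin 7) :
    Srho g = Fintype.piFinset (fun i => tset (g i)) := by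
  ext f
  simp only [Srho, Finset.mem_filter, Finset.mem_univ, true_and, Fintype.mem_piFinset]
  apply forall_congr'
  intro i
  unfold tset
  by_cases h : (g i : ℕ) < 6
  · rw [dif_pos h]
    have hne : g i ≠ 6 := by
      intro hc; rw [hc] at h; exact absurd h (by decide)
    simp only [Finset.mem_singleton, Fin.ext_iff]
    constructor
    · intro h2; exact (h2 hne).symm
    · intro h2 _; exact h2.symm
  · rw [dif_neg h]
    have : g i = 6 := by
      have := (g i).isLt; apply Fin.ext; omega
    simp [this]

lemma Srho_card_eq {N : ℕ} (g : Fin N → Fin 7) :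
    ((Srho g).card : ℂ) = ∏ i, ((tset (g i)).card : ℂ) := by
  rw [Srho_eq, Fintype.card_piFinset]; push_cast; rfl

lemma Srho_nonempty {N : ℕ} (g : Fin N → Fin 7) : (Srho g).Nonempty := by
  rw [Srho_eq]
  exact Fintype.piFinset_nonempty.mpr fun i => tset_nonempty (g i)

lemma keyB {N : ℕ} (g : Fin N → Fin 7) (x y : Fin N → Fin 2) :
    ∑ f ∈ Srho g, (starRingEnd ℂ) (prodState f x) * prodState f y
      = ((Srho g).card : ℂ) * sPlusState g y x := by
  have step1 : ∀ f : Fin N → Fin 6,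
      (starRingEnd ℂ) (prodState f x) * prodState f y
        = ∏ i, qs (f i) (y i) * (starRingEnd ℂ) (qs (f i) (x i)) := by
    intro f
    rw [prodState, prodState, map_prod, ← Finset.prod_mul_distrib]
    exact Finset.prod_congr rfl fun i _ => mul_comm _ _
  simp_rw [step1]
  rw [Srho_eq, ← Finset.prod_univ_sum (fun i => tset (g i))
    (fun i j => qs j (y i) * (starRingEnd ℂ) (qs j (x i)))]
  rw [Fintype.card_piFinset, sPlusState]
  push_cast
  simp only [Matrix.of_apply]
  rw [← Finset.prod_mul_distrib]
  exact Finset.prod_congr rfl fun i _ => key (g i) (y i) (x i)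

/-- For any Hermitian matrix `H` on `(ℂ²)^{⊗N}` and any `ρ ∈ S^+`, the average over
`|ψ⟩ ∈ S_ρ` of `⟨ψ|H|ψ⟩` equals `tr(ρH)`; consequently, there exists `|ψ⟩ ∈ S_ρ ⊆ S`
with `⟨ψ|H|ψ⟩ ≤ tr(ρH)`. -/
theorem average_energy_over_Srho_eq_trace (N : ℕ)
    (H : Matrix (Fin N → Fin 2) (Fin N → Fin 2) ℂ) (hH : H.IsHermitian)
    (g : Fin N → Fin 7) :
    ((Srho g).card : ℂ)⁻¹ *
        ∑ f ∈ Srho g, star (prodState f) ⬝ᵥ H.mulVec (prodState f)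
      = (sPlusState g * H).trace ∧
    ∃ f ∈ Srho g,
      (star (prodState f) ⬝ᵥ H.mulVec (prodState f)).re ≤ ((sPlusState g * H).trace).re := by
  have hne := Srho_nonempty g
  have hcard : ((Srho g).card : ℂ) ≠ 0 := by
    exact_mod_cast Nat.cast_ne_zero.mpr (Finset.card_ne_zero.mpr hne)
  have stepA : ∑ f ∈ Srho g, star (prodState f) ⬝ᵥ H.mulVec (prodState f)
      = ((Srho g).card : ℂ) * (sPlusState g * H).trace := by
    have expand : ∀ f : Fin N → Fin 6,
        star (prodState f) ⬝ᵥ H.mulVec (prodState f)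
          = ∑ x, ∑ y, H x y * ((starRingEnd ℂ) (prodState f x) * prodState f y) := by
      intro f
      simp only [dotProduct, Matrix.mulVec, Pi.star_apply, Finset.mul_sum]
      refine Finset.sum_congr rfl fun x _ => Finset.sum_congr rfl fun y _ => ?_
      simp [RCLike.star_def]
      ring
    simp_rw [expand]
    rw [Finset.sum_comm]
    have : ∀ x, ∑ f ∈ Srho g, ∑ y, H x y * ((starRingEnd ℂ) (prodState f x) * prodState f y)
        = ∑ y, H x y * (((Srho g).card : ℂ) * sPlusState g y x) := by
      intro x
      rw [Finset.sum_comm]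
      refine Finset.sum_congr rfl fun y _ => ?_
      rw [← Finset.mul_sum, keyB]
    simp_rw [this]
    rw [Matrix.trace, Finset.mul_sum]
    rw [Finset.sum_comm]
    refine Finset.sum_congr rfl fun y _ => ?_
    simp only [Matrix.diag, Matrix.mul_apply, Finset.mul_sum]
    refine Finset.sum_congr rfl fun x _ => by ring
  constructor
  · rw [stepA, ← mul_assoc, inv_mul_cancel₀ hcard, one_mul]
  · have hre : ∑ f ∈ Srho g, (star (prodState f) ⬝ᵥ H.mulVec (prodState f)).re
        = ∑ f ∈ Srho g, ((sPlusState g * H).trace).re := by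
      have := congrArg Complex.re stepA
      rw [Complex.re_sum] at this
      rw [this, Finset.sum_const, nsmul_eq_mul]
      simp [Complex.mul_re]
    exact Finset.exists_le_of_sum_le hne (le_of_eq hre)
end

section
/- Let H = Σ_P c_P P be a Hermitian operator on N qubits expanded in the Pauli basis with c_I = 0 and all c_P real. Suppose P₁, …, P_m are nonidentity Pauli strings with c_{P_j} ≠ 0 whose supports A_j := supp(P_j) are pairwise disjoint, and suppose that every Pauli string P with c_P ≠ 0 and supp(P) ⊆ A₁ ∪ ⋯ ∪ A_m is equal to one of P₁, …, P_m. Then there exists a product state |ψ⟩ ∈ S with ⟨ψ|H|ψ⟩ ≤ −Σ_{j=1}^m |c_{P_j}|. -/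
open scoped Matrix ComplexConjugate

/-- The single-qubit Pauli matrices `I₂, σˣ, σʸ, σᶻ`. -/
noncomputable def pauli : Fin 4 → Matrix (Fin 2) (Fin 2) ℂ
  | 0 => 1
  | 1 => !![0, 1; 1, 0]
  | 2 => !![0, -Complex.I; Complex.I, 0]
  | 3 => !![1, 0; 0, -1]

/-- The `N`-qubit Pauli string `⊗_i pauli (P i)` determined by `P : Fin N → Fin 4`;
its support is the set of qubits `i` with `P i ≠ 0`. -/
noncomputable def pauliStr {N : ℕ} (P : Fin N → Fin 4) :
    Matrix (Fin N → Fin 2) (Fin N → Fin 2) ℂ :=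
  Matrix.of fun x y => ∏ i, pauli (P i) (x i) (y i)

open Finset

/-!
Put each qubit of the support of `P j` into an eigenstate of the factor of `P j` acting on it,
with the eigenvalues chosen so that `⟨P j⟩ = -sign c_{P j}`, and each remaining (free) qubit into
`|z^+⟩` or `|z^-⟩`. Averaged over these signs, every Pauli string acting nontrivially on a free
qubit has expectation `0`, since `⟨z^+|σ|z^+⟩ + ⟨z^-|σ|z^-⟩ = 0` for `σ ≠ I₂`; by the closure
hypothesis the remaining strings with `c_Q ≠ 0` are the `P j`. So the mean energy is
`-∑ j |c_{P j}|`, and some choice of signs does at least as well as the mean.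
-/

/-- `⟨qs s| pauli a |qs s⟩`, read off from the Bloch vectors `±x̂, ±ŷ, ±ẑ` of the six states. -/
def qsExpect : Fin 6 → Fin 4 → ℝ
  | _, 0 => 1
  | 0, 1 => 1
  | 1, 1 => -1
  | 2, 2 => 1
  | 3, 2 => -1
  | 4, 3 => 1
  | 5, 3 => -1
  | _, _ => 0

/-- The eigenstate of `pauli a` with eigenvalue `if b then 1 else -1`; for `a = 0` those of `σᶻ`. -/
def qsEigen : Fin 4 → Bool → Fin 6
  | 1, true => 0
  | 1, false => 1
  | 2, true => 2
  | 2, false => 3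
  | _, true => 4
  | _, false => 5

@[simp]
lemma qsExpect_zero (s : Fin 6) : qsExpect s 0 = 1 := by
  fin_cases s <;> rfl

lemma qsExpect_qsEigen {a : Fin 4} (ha : a ≠ 0) (b : Bool) :
    qsExpect (qsEigen a b) a = if b then 1 else -1 := by
  fin_cases a <;> cases b <;> simp_all [qsExpect, qsEigen]

lemma sum_qsExpect_qsEigen_zero (a : Fin 4) :
    ∑ b, qsExpect (qsEigen 0 b) a = if a = 0 then 2 else 0 := by
  fin_cases a <;> simp [qsExpect, qsEigen]

lemma ofReal_sqrt_two_sq : (Real.sqrt 2 : ℂ) ^ 2 = 2 := by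
  rw [← Complex.ofReal_pow, Real.sq_sqrt zero_le_two, Complex.ofReal_ofNat]

lemma star_qs_dotProduct_pauli_mulVec (s : Fin 6) (a : Fin 4) :
    star (qs s) ⬝ᵥ pauli a *ᵥ qs s = qsExpect s a := by
  fin_cases s <;> fin_cases a <;>
    simp [qs, pauli, qsExpect, Matrix.mulVec, dotProduct] <;>
    ring_nf <;> norm_num [ofReal_sqrt_two_sq]

lemma star_dotProduct_tensor_mulVec_tensor {ι κ R : Type*} [Fintype ι] [DecidableEq ι]
    [Fintype κ] [CommSemiring R] [StarRing R] (v : ι → κ → R) (M : ι → Matrix κ κ R) :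
    star (fun x : ι → κ => ∏ i, v i (x i)) ⬝ᵥ
        Matrix.of (fun x y : ι → κ => ∏ i, M i (x i) (y i)) *ᵥ (fun x => ∏ i, v i (x i)) =
      ∏ i, star (v i) ⬝ᵥ M i *ᵥ v i := by
  simp only [dotProduct, Matrix.mulVec, Matrix.of_apply, Pi.star_apply, Fintype.prod_sum,
    Finset.mul_sum, star_prod, ← Finset.prod_mul_distrib]

lemma star_prodState_dotProduct_pauliStr_mulVec {N : ℕ} (f : Fin N → Fin 6) (Q : Fin N → Fin 4) :
    star (prodState f) ⬝ᵥ pauliStr Q *ᵥ prodState f = ∏ i, (qsExpect (f i) (Q i) : ℂ) := by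
  refine (star_dotProduct_tensor_mulVec_tensor (fun i => qs (f i)) fun i => pauli (Q i)).trans ?_
  exact prod_congr rfl fun i _ => star_qs_dotProduct_pauli_mulVec (f i) (Q i)

def classicalEnergy {N : ℕ} (c : (Fin N → Fin 4) → ℝ) (f : Fin N → Fin 6) : ℝ :=
  ∑ Q, c Q * ∏ i, qsExpect (f i) (Q i)

lemma re_star_prodState_dotProduct_mulVec {N : ℕ} (c : (Fin N → Fin 4) → ℝ)
    (f : Fin N → Fin 6) :
    (star (prodState f) ⬝ᵥ (∑ Q, (c Q : ℂ) • pauliStr Q) *ᵥ prodState f).re =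
      classicalEnergy c f := by
  simp only [Matrix.sum_mulVec, dotProduct_sum, Matrix.smul_mulVec, dotProduct_smul,
    star_prodState_dotProduct_pauliStr_mulVec, classicalEnergy, smul_eq_mul, ← Complex.ofReal_prod,
    ← Complex.ofReal_mul, ← Complex.ofReal_sum, Complex.ofReal_re]

def dephase {N : ℕ} (A : Fin N → Prop) [DecidablePred A] (f : Fin N → Fin 6)
    (ε : Fin N → Bool) : Fin N → Fin 6 :=
  fun i => if A i then f i else qsEigen 0 (ε i)

lemma sum_qsExpect_dephase {N : ℕ} (A : Fin N → Prop) [DecidablePred A] (f : Fin N → Fin 6)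
    (i : Fin N) (a : Fin 4) :
    ∑ b, qsExpect (if A i then f i else qsEigen 0 b) a =
      2 * if a ≠ 0 → A i then qsExpect (f i) a else 0 := by
  by_cases hA : A i
  · simp [hA, two_mul]
  · simp only [hA, if_false, sum_qsExpect_qsEigen_zero]
    by_cases ha : a = 0 <;> simp [ha]

lemma sum_prod_qsExpect_dephase {N : ℕ} (A : Fin N → Prop) [DecidablePred A]
    (f : Fin N → Fin 6) (Q : Fin N → Fin 4) :
    ∑ ε, ∏ i, qsExpect (dephase A f ε i) (Q i) =
      2 ^ N * if ∀ i, Q i ≠ 0 → A i then ∏ i, qsExpect (f i) (Q i) else 0 := by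
  unfold dephase
  rw [← Fintype.prod_sum fun i b => qsExpect (if A i then f i else qsEigen 0 b) (Q i)]
  simp only [sum_qsExpect_dephase, prod_mul_distrib, prod_const, card_univ, Fintype.card_fin,
    Fintype.prod_ite_zero]
  congr

lemma sum_classicalEnergy_dephase {N : ℕ} (c : (Fin N → Fin 4) → ℝ) (A : Fin N → Prop)
    [DecidablePred A] (f : Fin N → Fin 6) :
    ∑ ε, classicalEnergy c (dephase A f ε) =
      2 ^ N * ∑ Q, if ∀ i, Q i ≠ 0 → A i then c Q * ∏ i, qsExpect (f i) (Q i) else 0 := by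
  simp only [classicalEnergy]
  rw [sum_comm, mul_sum]
  refine sum_congr rfl fun Q _ => ?_
  rw [← mul_sum, sum_prod_qsExpect_dephase]
  split_ifs <;> ring

lemma prod_qsExpect_qsEigen_flip {N : ℕ} (a : Fin N → Fin 4) {i₀ : Fin N} (ha : a i₀ ≠ 0)
    (b : Bool) :
    ∏ i, qsExpect (qsEigen (a i) (decide (i ≠ i₀) || b)) (a i) = if b then 1 else -1 := by
  have hfactor : ∀ i, qsExpect (qsEigen (a i) (decide (i ≠ i₀) || b)) (a i) =
      if i = i₀ then (if b then 1 else -1) else 1 := by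
    intro i
    by_cases hi : i = i₀
    · subst hi
      simp [qsExpect_qsEigen ha]
    · by_cases hai : a i = 0
      · simp [hi, hai]
      · simp [hi, qsExpect_qsEigen hai]
  simp only [hfactor, prod_ite_eq', mem_univ, if_true]

/-- On the support of `P j`, an eigenstate of `P j` with eigenvalue `+1` on every qubit but `i₀ j`,
where the eigenvalue is `if σ j then 1 else -1`. -/
noncomputable def alignedState {N m : ℕ} (P : Fin m → Fin N → Fin 4) (i₀ : Fin m → Fin N)
    (σ : Fin m → Bool) : Fin N → Fin 6 :=
  fun i =>
    if h : ∃ j, P j i ≠ 0 then qsEigen (P h.choose i) (decide (i ≠ i₀ h.choose) || σ h.choose)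
    else 4

section DisjointSupports

variable {N m : ℕ} {P : Fin m → Fin N → Fin 4}

lemma eq_of_disjoint_supports (hdisj : ∀ j k, j ≠ k → ∀ i, P j i = 0 ∨ P k i = 0)
    {i : Fin N} {j k : Fin m} (hj : P j i ≠ 0) (hk : P k i ≠ 0) : j = k := by
  by_contra hjk
  rcases hdisj j k hjk i with h | h <;> contradiction

lemma injective_of_disjoint_supports (hPne : ∀ j, P j ≠ fun _ => 0)
    (hdisj : ∀ j k, j ≠ k → ∀ i, P j i = 0 ∨ P k i = 0) : Function.Injective P := by
  intro j k hjk
  obtain ⟨i, hi⟩ := Function.ne_iff.mp (hPne j)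
  exact eq_of_disjoint_supports hdisj hi (hjk ▸ hi)

lemma sum_ite_supported_eq_sum (c : (Fin N → Fin 4) → ℝ) (hinj : Function.Injective P)
    (hclosed : ∀ Q : Fin N → Fin 4, c Q ≠ 0 →
      (∀ i, Q i ≠ 0 → ∃ j, P j i ≠ 0) → ∃ j, Q = P j)
    (g : (Fin N → Fin 4) → ℝ) :
    ∑ Q, (if ∀ i, Q i ≠ 0 → ∃ j, P j i ≠ 0 then c Q * g Q else 0) = ∑ j, c (P j) * g (P j) := by
  refine (Fintype.sum_of_injective P hinj _ _ (fun Q hQ => ?_) fun j => ?_).symm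
  · split_ifs with hsupp
    · by_cases hc : c Q = 0
      · rw [hc, zero_mul]
      · obtain ⟨j, rfl⟩ := hclosed Q hc hsupp
        exact absurd ⟨j, rfl⟩ hQ
    · rfl
  · rw [if_pos fun i hi => ⟨j, hi⟩]

lemma prod_qsExpect_alignedState (hdisj : ∀ j k, j ≠ k → ∀ i, P j i = 0 ∨ P k i = 0)
    {i₀ : Fin m → Fin N} (hi₀ : ∀ j, P j (i₀ j) ≠ 0) (σ : Fin m → Bool) (j : Fin m) :
    ∏ i, qsExpect (alignedState P i₀ σ i) (P j i) = if σ j then 1 else -1 := by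
  rw [← prod_qsExpect_qsEigen_flip (P j) (hi₀ j) (σ j)]
  refine prod_congr rfl fun i _ => ?_
  by_cases hji : P j i = 0
  · simp [hji]
  · have h : ∃ k, P k i ≠ 0 := ⟨j, hji⟩
    simp only [alignedState, dif_pos h, eq_of_disjoint_supports hdisj h.choose_spec hji]

end DisjointSupports

lemma mul_ite_neg_eq_neg_abs (x : ℝ) : x * (if x < 0 then 1 else -1) = -|x| := by
  split_ifs with hx
  · rw [abs_of_neg hx, mul_one, neg_neg]
  · rw [abs_of_nonneg (not_lt.mp hx), mul_neg_one]

theorem exists_product_state_low_energy_general (N m : ℕ)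
    (c : (Fin N → Fin 4) → ℝ)
    (P : Fin m → (Fin N → Fin 4))
    (hPne : ∀ j, P j ≠ fun _ => 0)
    (hdisj : ∀ j k, j ≠ k → ∀ i, P j i = 0 ∨ P k i = 0)
    (hclosed : ∀ Q : Fin N → Fin 4, c Q ≠ 0 →
      (∀ i, Q i ≠ 0 → ∃ j, P j i ≠ 0) → ∃ j, Q = P j) :
    ∃ f : Fin N → Fin 6,
      (star (prodState f) ⬝ᵥ
          (∑ Q : Fin N → Fin 4, (c Q : ℂ) • pauliStr Q).mulVec (prodState f)).re
        ≤ -∑ j, |c (P j)| := by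
  classical
  choose i₀ hi₀ using fun j => Function.ne_iff.mp (hPne j)
  let f := alignedState P i₀ fun j => decide (c (P j) < 0)
  let A : Fin N → Prop := fun i => ∃ j, P j i ≠ 0
  have hsum : ∑ ε, classicalEnergy c (dephase A f ε) = ∑ _ε : Fin N → Bool, -∑ j, |c (P j)| := by
    rw [sum_classicalEnergy_dephase,
      sum_ite_supported_eq_sum c (injective_of_disjoint_supports hPne hdisj) hclosed]
    simp only [f, prod_qsExpect_alignedState hdisj hi₀, decide_eq_true_eq, mul_ite_neg_eq_neg_abs,
      sum_const, card_univ, Fintype.card_fun, Fintype.card_bool, Fintype.card_fin, nsmul_eq_mul,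
      sum_neg_distrib, Nat.cast_pow, Nat.cast_ofNat]
  obtain ⟨ε, -, hε⟩ := exists_le_of_sum_le univ_nonempty hsum.le
  exact ⟨dephase A f ε, by rwa [re_star_prodState_dotProduct_mulVec]⟩

/-- Let `H = Σ_P c_P P` be a Hermitian operator on `N` qubits expanded in the Pauli basis
with `c_I = 0` and all `c_P` real. If `P₁, …, P_m` are nonidentity Pauli strings with
`c_{P_j} ≠ 0`, pairwise disjoint supports, and such that every Pauli string `P` with
`c_P ≠ 0` and `supp(P) ⊆ A₁ ∪ ⋯ ∪ A_m` equals some `P_j`, then there is a product state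
`|ψ⟩ ∈ S` with `⟨ψ|H|ψ⟩ ≤ −Σ_j |c_{P_j}|`. -/
theorem exists_product_state_low_energy (N m : ℕ)
    (c : (Fin N → Fin 4) → ℝ) (hcI : c (fun _ => 0) = 0)
    (P : Fin m → (Fin N → Fin 4))
    (hPne : ∀ j, P j ≠ fun _ => 0)
    (hcP : ∀ j, c (P j) ≠ 0)
    (hdisj : ∀ j k, j ≠ k → ∀ i, P j i = 0 ∨ P k i = 0)
    (hclosed : ∀ Q : Fin N → Fin 4, c Q ≠ 0 →
      (∀ i, Q i ≠ 0 → ∃ j, P j i ≠ 0) → ∃ j, Q = P j) :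
    ∃ f : Fin N → Fin 6,
      (star (prodState f) ⬝ᵥ
          (∑ Q : Fin N → Fin 4, (c Q : ℂ) • pauliStr Q).mulVec (prodState f)).re
        ≤ -∑ j, |c (P j)| :=
  exists_product_state_low_energy_general N m c P hPne hdisj hclosed
end

section
/- Let H be a Hermitian matrix on ℂ^d with orthonormal eigenbasis {|j⟩}_{j=1}^d and corresponding eigenvalues {e_j} that are pairwise distinct. Then for any matrix B on ℂ^d and any unit vector |ψ⟩, the time average lim_{T→∞} (1/T) ∫₀^T ⟨ψ| e^{iHt} B e^{−iHt} |ψ⟩ dt exists and equals Σ_{j=1}^d |⟨j|ψ⟩|² ⟨j|B|j⟩. -/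
/-!
Writing `cⱼ = ⟨j|ψ⟩`, the expectation `⟨ψ|B(t)|ψ⟩` is the trigonometric polynomial
`∑ⱼₖ conj cⱼ cₖ ⟨j|B|k⟩ e^{i(eⱼ - eₖ)t}`. The time average of `e^{iωt}` over `[0, T]` is `1` for
`ω = 0` and `O(1/(|ω| T))` otherwise, so in the limit only the terms with `eⱼ = eₖ` survive,
and by distinctness of the eigenvalues these are the diagonal ones.
-/

open scoped Matrix

namespace Matrix

variable {n R : Type*} [Fintype n] [DecidableEq n]

theorem sum_smul_eq_of_orthonormal [CommRing R] [StarRing R] {v : n → n → R}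
    (hv : ∀ j k, star (v j) ⬝ᵥ v k = if j = k then 1 else 0) (x : n → R) :
    ∑ j, (star (v j) ⬝ᵥ x) • v j = x := by
  let V : Matrix n n R := of fun i j => v j i
  have hVV : Vᴴ * V = 1 := by
    ext j k
    simpa [V, mul_apply, one_apply, dotProduct] using hv j k
  calc ∑ j, (star (v j) ⬝ᵥ x) • v j = V *ᵥ Vᴴ *ᵥ x := by
        ext i
        simp [V, mulVec, dotProduct, Finset.sum_apply, Finset.mul_sum, mul_comm]
    _ = x := by rw [mulVec_mulVec, mul_eq_one_comm.mp hVV, one_mulVec]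

theorem star_dotProduct_mulVec_eq_sum_of_orthonormal [CommRing R] [StarRing R] {v : n → n → R}
    (hv : ∀ j k, star (v j) ⬝ᵥ v k = if j = k then 1 else 0) (M : Matrix n n R) (x y : n → R) :
    star x ⬝ᵥ M *ᵥ y = ∑ j, ∑ k,
      star (star (v j) ⬝ᵥ x) * (star (v k) ⬝ᵥ y) * (star (v j) ⬝ᵥ M *ᵥ v k) := by
  conv_lhs => rw [← sum_smul_eq_of_orthonormal hv x, ← sum_smul_eq_of_orthonormal hv y]
  simp only [star_sum, star_smul, mulVec_sum, mulVec_smul, sum_dotProduct, dotProduct_sum,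
    smul_dotProduct, dotProduct_smul, smul_eq_mul, Finset.mul_sum]
  rw [Finset.sum_comm]
  refine Finset.sum_congr rfl fun j _ => Finset.sum_congr rfl fun k _ => ?_
  ring

theorem exp_mulVec_of_mulVec_eq_smul {A : Matrix n n ℂ} {w : n → ℂ} {μ : ℂ}
    (h : A *ᵥ w = μ • w) : NormedSpace.exp A *ᵥ w = Complex.exp μ • w := by
  -- Any submultiplicative norm will do: it only serves to sum the exponential series.
  let : NormedRing (Matrix n n ℂ) := Matrix.linftyOpNormedRing
  let : NormedAlgebra ℂ (Matrix n n ℂ) := Matrix.linftyOpNormedAlgebra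
  have hpow : ∀ k : ℕ, A ^ k *ᵥ w = μ ^ k • w := by
    intro k
    induction k with
    | zero => simp
    | succ k ih => rw [pow_succ', ← mulVec_mulVec, ih, mulVec_smul, h, smul_smul, pow_succ]
  have hA := (NormedSpace.exp_series_hasSum_exp' (𝕂 := ℂ) A).map
    (mulVec.addMonoidHomLeft w) (continuous_id.matrix_mulVec continuous_const)
  have hμ := (NormedSpace.exp_series_hasSum_exp' (𝕂 := ℂ) μ).smul_const w
  rw [← Complex.exp_eq_exp_ℂ] at hμ
  refine hA.unique (hμ.congr_fun fun k => ?_)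
  change ((k.factorial : ℂ)⁻¹ • A ^ k) *ᵥ w = _
  rw [smul_mulVec, hpow, smul_smul, smul_eq_mul]

theorem IsHermitian.star_dotProduct_exp_smul_mulVec {H : Matrix n n ℂ} (hH : H.IsHermitian)
    {w : n → ℂ} {μ : ℝ} (h : H *ᵥ w = (μ : ℂ) • w) (s : ℂ) (x : n → ℂ) :
    star w ⬝ᵥ NormedSpace.exp (s • H) *ᵥ x = Complex.exp (s * μ) * (star w ⬝ᵥ x) := by
  have hw : (star s • H) *ᵥ w = (star s * μ) • w := by rw [smul_mulVec, h, smul_smul]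
  rw [dotProduct_mulVec, ← conjTranspose_conjTranspose (NormedSpace.exp (s • H)), ← star_mulVec,
    ← exp_conjTranspose, conjTranspose_smul, hH.eq, exp_mulVec_of_mulVec_eq_smul hw, star_smul,
    smul_dotProduct, smul_eq_mul, Complex.star_def, ← Complex.exp_conj, map_mul,
    Complex.conj_ofReal, ← Complex.star_def, star_star]

theorem IsHermitian.star_dotProduct_heisenberg_mulVec {H : Matrix n n ℂ} (hH : H.IsHermitian)
    {v w : n → ℂ} {μ ν : ℝ} (hv : H *ᵥ v = (μ : ℂ) • v) (hw : H *ᵥ w = (ν : ℂ) • w)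
    (B : Matrix n n ℂ) (t : ℝ) :
    star v ⬝ᵥ (NormedSpace.exp ((Complex.I * t) • H) * B *
        NormedSpace.exp (-((Complex.I * t) • H))) *ᵥ w
      = Complex.exp (Complex.I * ↑(μ - ν) * t) * (star v ⬝ᵥ B *ᵥ w) := by
  have hw' : (-(Complex.I * t) • H) *ᵥ w = (-(Complex.I * t) * ν) • w := by
    rw [smul_mulVec, hw, smul_smul]
  rw [← mulVec_mulVec, ← mulVec_mulVec, ← neg_smul, exp_mulVec_of_mulVec_eq_smul hw', mulVec_smul,
    hH.star_dotProduct_exp_smul_mulVec hv, dotProduct_smul, smul_eq_mul, ← mul_assoc,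
    ← Complex.exp_add]
  push_cast
  ring_nf

end Matrix

open Matrix in
theorem heisenberg_expectation_eq_sum {n : Type*} [Fintype n] [DecidableEq n]
    {H : Matrix n n ℂ} (hH : H.IsHermitian) {v : n → n → ℂ}
    (hv : ∀ j k, star (v j) ⬝ᵥ v k = if j = k then 1 else 0)
    {e : n → ℝ} (heig : ∀ j, H *ᵥ v j = (e j : ℂ) • v j) (B : Matrix n n ℂ) (ψ : n → ℂ) (t : ℝ) :
    star ψ ⬝ᵥ (NormedSpace.exp ((Complex.I * t) • H) * B *
        NormedSpace.exp (-((Complex.I * t) • H))) *ᵥ ψ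
      = ∑ j, ∑ k, star (star (v j) ⬝ᵥ ψ) * (star (v k) ⬝ᵥ ψ) * (star (v j) ⬝ᵥ B *ᵥ v k) *
          Complex.exp (Complex.I * ↑(e j - e k) * t) := by
  rw [star_dotProduct_mulVec_eq_sum_of_orthonormal hv]
  refine Finset.sum_congr rfl fun j _ => Finset.sum_congr rfl fun k _ => ?_
  rw [hH.star_dotProduct_heisenberg_mulVec (heig j) (heig k)]
  ring

open Filter Topology Complex

noncomputable def timeAverage (f : ℝ → ℂ) (T : ℝ) : ℂ :=
  (T : ℂ)⁻¹ * ∫ t in (0 : ℝ)..T, f t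

theorem timeAverage_sum {ι : Type*} (s : Finset ι) {f : ι → ℝ → ℂ}
    (hf : ∀ i ∈ s, Continuous (f i)) (T : ℝ) :
    timeAverage (fun t => ∑ i ∈ s, f i t) T = ∑ i ∈ s, timeAverage (f i) T := by
  rw [timeAverage, intervalIntegral.integral_finsetSum fun i hi => (hf i hi).intervalIntegrable _ _,
    Finset.mul_sum]
  rfl

theorem timeAverage_const_mul (a : ℂ) (f : ℝ → ℂ) (T : ℝ) :
    timeAverage (fun t => a * f t) T = a * timeAverage f T := by
  rw [timeAverage, timeAverage, intervalIntegral.integral_const_mul, mul_left_comm]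

theorem timeAverage_one {T : ℝ} (hT : T ≠ 0) : timeAverage (fun _ => 1) T = 1 := by
  simp [timeAverage, hT]

theorem norm_timeAverage_exp_le {ω : ℝ} (hω : ω ≠ 0) {T : ℝ} (hT : 0 < T) :
    ‖timeAverage (fun t => exp (I * ω * t)) T‖ ≤ 2 / |ω| * T⁻¹ := by
  have hc : I * ω ≠ 0 := mul_ne_zero I_ne_zero (ofReal_ne_zero.mpr hω)
  have hexp : ‖exp (I * ω * T)‖ = 1 := by
    rw [norm_exp]
    simp
  rw [timeAverage, integral_exp_mul_complex hc, norm_mul, norm_div, norm_inv, norm_real,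
    Real.norm_of_nonneg hT.le, norm_mul, norm_I, norm_real, Real.norm_eq_abs, one_mul, ofReal_zero,
    mul_zero, exp_zero]
  calc T⁻¹ * (‖exp (I * ω * T) - 1‖ / |ω|) ≤ T⁻¹ * (2 / |ω|) := by
        gcongr
        calc ‖exp (I * ω * T) - 1‖ ≤ ‖exp (I * ω * T)‖ + ‖(1 : ℂ)‖ := norm_sub_le _ _
          _ = 2 := by rw [hexp, norm_one]; norm_num
    _ = 2 / |ω| * T⁻¹ := mul_comm _ _

theorem tendsto_timeAverage_exp (ω : ℝ) :
    Tendsto (timeAverage fun t => exp (I * ω * t)) atTop (𝓝 (if ω = 0 then 1 else 0)) := by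
  split_ifs with hω
  · subst hω
    refine tendsto_const_nhds.congr' ?_
    filter_upwards [eventually_gt_atTop 0] with T hT
    simpa using (timeAverage_one hT.ne').symm
  · refine squeeze_zero_norm' ?_ (by simpa using tendsto_inv_atTop_zero.const_mul (2 / |ω|))
    filter_upwards [eventually_gt_atTop 0] with T hT
    exact norm_timeAverage_exp_le hω hT

theorem tendsto_timeAverage_sum_mul_exp {ι : Type*} (s : Finset ι) (a : ι → ℂ) (ω : ι → ℝ) :
    Tendsto (timeAverage fun t => ∑ i ∈ s, a i * exp (I * ω i * t)) atTop
      (𝓝 (∑ i ∈ s, if ω i = 0 then a i else 0)) := by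
  have hcont : ∀ i ∈ s, Continuous fun t : ℝ => a i * exp (I * ω i * t) := fun i _ => by fun_prop
  have hlim := tendsto_finsetSum s fun i _ => (tendsto_timeAverage_exp (ω i)).const_mul (a i)
  simp only [mul_boole] at hlim
  refine hlim.congr fun T => ?_
  rw [timeAverage_sum s hcont]
  simp only [timeAverage_const_mul]

theorem time_average_expectation_general (d : ℕ)
    (H : Matrix (Fin d) (Fin d) ℂ) (hH : H.IsHermitian)
    (v : Fin d → (Fin d → ℂ))
    (hv : ∀ j k, star (v j) ⬝ᵥ v k = if j = k then 1 else 0)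
    (e : Fin d → ℝ) (heig : ∀ j, H.mulVec (v j) = (e j : ℂ) • v j)
    (hdist : Function.Injective e)
    (B : Matrix (Fin d) (Fin d) ℂ) (ψ : Fin d → ℂ) :
    Filter.Tendsto
      (fun T : ℝ => (T : ℂ)⁻¹ * ∫ t in (0 : ℝ)..T,
        star ψ ⬝ᵥ ((NormedSpace.exp ((Complex.I * t) • H) * B *
          NormedSpace.exp (-((Complex.I * t) • H))).mulVec ψ))
      Filter.atTop
      (nhds (∑ j, (‖star (v j) ⬝ᵥ ψ‖ : ℂ) ^ 2 * (star (v j) ⬝ᵥ B.mulVec (v j)))) := by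
  have hlim := tendsto_timeAverage_sum_mul_exp Finset.univ
    (fun p : Fin d × Fin d => star (star (v p.1) ⬝ᵥ ψ) * (star (v p.2) ⬝ᵥ ψ) *
      (star (v p.1) ⬝ᵥ B *ᵥ v p.2)) (fun p => e p.1 - e p.2)
  simp only [Fintype.sum_prod_type, ← heisenberg_expectation_eq_sum hH hv heig, sub_eq_zero,
    hdist.eq_iff, Finset.sum_ite_eq, Finset.mem_univ, if_true] at hlim
  simp only [Complex.star_def, Complex.conj_mul'] at hlim
  exact hlim

/-- Let `H` be a Hermitian matrix on `ℂ^d` with orthonormal eigenbasis `{|j⟩}` and pairwise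
distinct eigenvalues `{e_j}`. Then for any matrix `B` and any unit vector `|ψ⟩`, the time
average `lim_{T→∞} (1/T) ∫₀^T ⟨ψ| e^{iHt} B e^{−iHt} |ψ⟩ dt` exists and equals
`Σ_j |⟨j|ψ⟩|² ⟨j|B|j⟩`. -/
theorem time_average_expectation (d : ℕ)
    (H : Matrix (Fin d) (Fin d) ℂ) (hH : H.IsHermitian)
    (v : Fin d → (Fin d → ℂ))
    (hv : ∀ j k, star (v j) ⬝ᵥ v k = if j = k then 1 else 0)
    (e : Fin d → ℝ) (heig : ∀ j, H.mulVec (v j) = (e j : ℂ) • v j)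
    (hdist : Function.Injective e)
    (B : Matrix (Fin d) (Fin d) ℂ) (ψ : Fin d → ℂ) (hψ : star ψ ⬝ᵥ ψ = 1) :
    Filter.Tendsto
      (fun T : ℝ => (T : ℂ)⁻¹ * ∫ t in (0 : ℝ)..T,
        star ψ ⬝ᵥ ((NormedSpace.exp ((Complex.I * t) • H) * B *
          NormedSpace.exp (-((Complex.I * t) • H))).mulVec ψ))
      Filter.atTop
      (nhds (∑ j, (‖star (v j) ⬝ᵥ ψ‖ : ℂ) ^ 2 * (star (v j) ⬝ᵥ B.mulVec (v j)))) :=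
  time_average_expectation_general d H hH v hv e heig hdist B ψ
end

section
/- Let H be a Hermitian matrix on ℂ^d with orthonormal eigenbasis {|j⟩}_{j=1}^d and eigenvalues {e_j} whose spectrum has non-degenerate gaps. Then for any matrix B on ℂ^d and any unit vector |ψ⟩, writing B̄ := Σ_j |⟨j|ψ⟩|² ⟨j|B|j⟩, the temporal fluctuation ΔB := lim_{T→∞} (1/T) ∫₀^T |⟨ψ| e^{iHt} B e^{−iHt} |ψ⟩ − B̄|² dt exists and equals Σ_{j≠k} |⟨j|ψ⟩|² |⟨k|ψ⟩|² |⟨j|B|k⟩|². -/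
/-!
Write `c_j = ⟨j|ψ⟩` and `B_jk = ⟨j|B|k⟩`. Diagonalising `H` in the eigenbasis gives
`⟨ψ|e^{iHt} B e^{-iHt}|ψ⟩ - B̄ = ∑_{j ≠ k} c̄_j c_k B_jk e^{i(e_j - e_k)t}`, a trigonometric
polynomial whose frequencies `e_j - e_k` are pairwise distinct because the gaps are
non-degenerate. For such a polynomial `∑ a_p e^{iω_p t}`, the squared modulus is
`∑_{p,q} a_p ā_q e^{i(ω_p - ω_q)t}`, and the time average of `e^{iδt}` tends to `1` if `δ = 0`
and is `O(1/(|δ| T))` otherwise, so only the terms `p = q` survive in the limit.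
-/

open scoped Matrix ComplexConjugate
open Filter Topology Complex

theorem Finset.sum_sum_eq_sum_add_sum_offDiag {ι M : Type*} [DecidableEq ι] [AddCommMonoid M]
    (s : Finset ι) (f : ι → ι → M) :
    ∑ j ∈ s, ∑ k ∈ s, f j k = ∑ j ∈ s, f j j + ∑ p ∈ s.offDiag, f p.1 p.2 := by
  rw [← Finset.sum_product', ← Finset.diag_union_offDiag,
    Finset.sum_union (Finset.disjoint_diag_offDiag s), Finset.sum_diag]

theorem tendsto_inv_mul_integral_exp_I_mul (δ : ℝ) :
    Tendsto (fun T : ℝ => (T : ℂ)⁻¹ * ∫ t in (0 : ℝ)..T, exp (I * δ * t)) atTop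
      (𝓝 (if δ = 0 then 1 else 0)) := by
  split_ifs with hδ
  · refine tendsto_const_nhds.congr' ?_
    filter_upwards [eventually_ne_atTop 0] with T hT
    simp [hδ, inv_mul_cancel₀ (ofReal_ne_zero.mpr hT)]
  · have hc : I * δ ≠ 0 := mul_ne_zero I_ne_zero (ofReal_ne_zero.mpr hδ)
    have hbound : ∀ T : ℝ, ‖(T : ℂ)⁻¹ * ∫ t in (0 : ℝ)..T, exp (I * δ * t)‖ ≤
        |T|⁻¹ * (2 / ‖I * (δ : ℂ)‖) := by
      intro T
      rw [integral_exp_mul_complex hc, norm_mul, norm_div, norm_inv, norm_real, Real.norm_eq_abs]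
      gcongr
      calc ‖exp (I * δ * T) - exp (I * δ * ((0 : ℝ) : ℂ))‖
          ≤ ‖exp (I * δ * T)‖ + ‖exp (I * δ * ((0 : ℝ) : ℂ))‖ := norm_sub_le _ _
        _ = 2 := by
          rw [norm_exp, norm_exp]
          norm_num
    refine squeeze_zero_norm hbound ?_
    simpa using ((tendsto_inv_atTop_zero.comp tendsto_abs_atTop_atTop).mul_const
      (2 / ‖I * (δ : ℂ)‖))

section TrigonometricPolynomial

variable {ι : Type*} (s : Finset ι) (a : ι → ℂ) (ω : ι → ℝ)

theorem ofReal_norm_sum_exp_sq (t : ℝ) :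
    ((‖∑ p ∈ s, a p * exp (I * ω p * t)‖ ^ 2 : ℝ) : ℂ) =
      ∑ pq ∈ s ×ˢ s, a pq.1 * conj (a pq.2) * exp (I * ↑(ω pq.1 - ω pq.2) * t) := by
  rw [ofReal_pow, ← mul_conj', map_sum, Finset.sum_mul_sum, ← Finset.sum_product']
  refine Finset.sum_congr rfl fun pq _ => ?_
  rw [map_mul, ← exp_conj, ofReal_sub, mul_sub, sub_mul, sub_eq_add_neg, exp_add]
  simp only [map_mul, conj_I, conj_ofReal]
  ring_nf

theorem tendsto_inv_mul_integral_norm_sum_exp_sq (hω : Set.InjOn ω s) :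
    Tendsto (fun T : ℝ => T⁻¹ * ∫ t in (0 : ℝ)..T, ‖∑ p ∈ s, a p * exp (I * ω p * t)‖ ^ 2)
      atTop (𝓝 (∑ p ∈ s, ‖a p‖ ^ 2)) := by
  rw [← tendsto_ofReal_iff]
  have hmean : ∀ T : ℝ,
      (((T⁻¹ * ∫ t in (0 : ℝ)..T, ‖∑ p ∈ s, a p * exp (I * ω p * t)‖ ^ 2 : ℝ)) : ℂ) =
        ∑ pq ∈ s ×ˢ s, a pq.1 * conj (a pq.2) *
          ((T : ℂ)⁻¹ * ∫ t in (0 : ℝ)..T, exp (I * ↑(ω pq.1 - ω pq.2) * t)) := by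
    intro T
    simp only [ofReal_mul, ofReal_inv, ← intervalIntegral.integral_ofReal,
      ofReal_norm_sum_exp_sq]
    rw [intervalIntegral.integral_finsetSum
      fun pq _ => (by fun_prop : Continuous _).intervalIntegrable _ _, Finset.mul_sum]
    refine Finset.sum_congr rfl fun pq _ => ?_
    rw [intervalIntegral.integral_const_mul]
    ring
  have hlimit : ∑ pq ∈ s ×ˢ s, a pq.1 * conj (a pq.2) * (if ω pq.1 - ω pq.2 = 0 then 1 else 0) =
      ((∑ p ∈ s, ‖a p‖ ^ 2 : ℝ) : ℂ) := by
    rw [Finset.sum_product, ofReal_sum]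
    refine Finset.sum_congr rfl fun p hp => ?_
    rw [Finset.sum_eq_single_of_mem p hp]
    · simp [mul_conj']
    · intro q hq hqp
      rw [if_neg (sub_ne_zero.mpr fun h => hqp (hω hp hq h).symm), mul_zero]
  simp only [hmean, ← hlimit]
  exact tendsto_finsetSum _ fun pq _ =>
    (tendsto_inv_mul_integral_exp_I_mul _).const_mul _

end TrigonometricPolynomial

namespace Matrix

variable {n : Type*} [Fintype n] [DecidableEq n] {v : n → n → ℂ}

theorem conjTranspose_mul_self_of_orthonormal
    (hv : ∀ j k, star (v j) ⬝ᵥ v k = if j = k then 1 else 0) :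
    (of v)ᵀᴴ * (of v)ᵀ = 1 := by
  ext j k
  simpa [mul_apply, one_apply, dotProduct] using hv j k

theorem eq_mul_diagonal_mul_conjTranspose_of_eigenvectors {H : Matrix n n ℂ} {μ : n → ℂ}
    (hv : ∀ j k, star (v j) ⬝ᵥ v k = if j = k then 1 else 0)
    (hHv : ∀ j, H *ᵥ v j = μ j • v j) :
    H = (of v)ᵀ * diagonal μ * (of v)ᵀᴴ := by
  have hHW : H * (of v)ᵀ = (of v)ᵀ * diagonal μ := by
    ext i j
    rw [mul_diagonal]
    simpa [mul_apply, mulVec, dotProduct, mul_comm] using congrFun (hHv j) i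
  rw [← hHW, mul_assoc, mul_eq_one_comm.mp (conjTranspose_mul_self_of_orthonormal hv), mul_one]

theorem exp_smul_eq_of_eigenvectors {H : Matrix n n ℂ} {μ : n → ℂ}
    (hv : ∀ j k, star (v j) ⬝ᵥ v k = if j = k then 1 else 0)
    (hHv : ∀ j, H *ᵥ v j = μ j • v j) (z : ℂ) :
    NormedSpace.exp (z • H) = (of v)ᵀ * diagonal (fun j => exp (z * μ j)) * (of v)ᵀᴴ := by
  have hWW := conjTranspose_mul_self_of_orthonormal hv
  let W : (Matrix n n ℂ)ˣ := ⟨(of v)ᵀ, (of v)ᵀᴴ, mul_eq_one_comm.mp hWW, hWW⟩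
  have hconj := exp_units_conj W (diagonal (z • μ))
  simp only [W, Units.inv_mk, exp_diagonal, Pi.exp_def, ← exp_eq_exp_ℂ, Pi.smul_apply,
    smul_eq_mul] at hconj
  rw [← hconj, eq_mul_diagonal_mul_conjTranspose_of_eigenvectors hv hHv,
    diagonal_smul, mul_smul_comm, smul_mul_assoc]

omit [DecidableEq n] in
theorem star_dotProduct_mul_mul_conjTranspose_mulVec {m : Type*} [Fintype m]
    (W : Matrix n m ℂ) (X : Matrix m m ℂ) (ψ : n → ℂ) :
    star ψ ⬝ᵥ ((W * X * Wᴴ) *ᵥ ψ) = star (Wᴴ *ᵥ ψ) ⬝ᵥ (X *ᵥ (Wᴴ *ᵥ ψ)) := by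
  rw [← mulVec_mulVec, ← mulVec_mulVec, dotProduct_mulVec, star_mulVec,
    conjTranspose_conjTranspose]

omit [DecidableEq n] in
theorem conjTranspose_transpose_of_mulVec_apply (ψ : n → ℂ) (j : n) :
    ((of v)ᵀᴴ *ᵥ ψ) j = star (v j) ⬝ᵥ ψ := by
  simp [mulVec, dotProduct]

omit [DecidableEq n] in
theorem conjTranspose_transpose_of_mul_mul_apply (B : Matrix n n ℂ) (j k : n) :
    ((of v)ᵀᴴ * B * (of v)ᵀ) j k = star (v j) ⬝ᵥ B *ᵥ v k := by
  simp only [mul_apply, conjTranspose_apply, transpose_apply, of_apply, dotProduct, mulVec,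
    Pi.star_apply, Finset.sum_mul, Finset.mul_sum]
  rw [Finset.sum_comm]
  exact Finset.sum_congr rfl fun _ _ => Finset.sum_congr rfl fun _ _ => by ring

theorem star_dotProduct_conj_mul_conj_mulVec (B : Matrix n n ℂ) (ψ p q : n → ℂ) :
    star ψ ⬝ᵥ (((of v)ᵀ * diagonal p * (of v)ᵀᴴ * B * ((of v)ᵀ * diagonal q * (of v)ᵀᴴ)) *ᵥ ψ) =
      ∑ j, ∑ k, conj (star (v j) ⬝ᵥ ψ) * p j * (star (v j) ⬝ᵥ B *ᵥ v k) * q k *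
        (star (v k) ⬝ᵥ ψ) := by
  have hmat : (of v)ᵀ * diagonal p * (of v)ᵀᴴ * B * ((of v)ᵀ * diagonal q * (of v)ᵀᴴ) =
      (of v)ᵀ * (diagonal p * ((of v)ᵀᴴ * B * (of v)ᵀ) * diagonal q) * (of v)ᵀᴴ := by
    simp only [Matrix.mul_assoc]
  rw [hmat, star_dotProduct_mul_mul_conjTranspose_mulVec]
  simp only [← conjTranspose_transpose_of_mul_mul_apply (v := v) B,
    ← conjTranspose_transpose_of_mulVec_apply (v := v) ψ]
  generalize (of v)ᵀᴴ *ᵥ ψ = c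
  generalize (of v)ᵀᴴ * B * (of v)ᵀ = N
  simp only [dotProduct, mulVec, diagonal_mul, mul_diagonal, Pi.star_apply, Finset.mul_sum,
    Complex.star_def]
  exact Finset.sum_congr rfl fun _ _ => Finset.sum_congr rfl fun _ _ => by ring

theorem star_dotProduct_exp_mul_mul_exp_mulVec_sub_eq_sum_offDiag {H : Matrix n n ℂ}
    {e : n → ℝ} (hv : ∀ j k, star (v j) ⬝ᵥ v k = if j = k then 1 else 0)
    (hHv : ∀ j, H *ᵥ v j = (e j : ℂ) • v j) (B : Matrix n n ℂ) (ψ : n → ℂ) (t : ℝ) :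
    star ψ ⬝ᵥ ((NormedSpace.exp ((I * t) • H) * B * NormedSpace.exp (-((I * t) • H))) *ᵥ ψ) -
        ∑ j, (‖star (v j) ⬝ᵥ ψ‖ : ℂ) ^ 2 * (star (v j) ⬝ᵥ B *ᵥ v j) =
      ∑ p ∈ Finset.univ.offDiag, conj (star (v p.1) ⬝ᵥ ψ) * (star (v p.2) ⬝ᵥ ψ) *
        (star (v p.1) ⬝ᵥ B *ᵥ v p.2) * exp (I * ↑(e p.1 - e p.2) * t) := by
  have hdiag : ∀ (c m : ℂ) (x : ℝ),
      conj c * exp (I * t * x) * m * exp (-(I * t) * x) * c = (‖c‖ : ℂ) ^ 2 * m := by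
    intro c m x
    have hphase : exp (I * t * x) * exp (-(I * t) * x) = 1 := by
      rw [← exp_add, neg_mul, add_neg_cancel, exp_zero]
    rw [← conj_mul']
    linear_combination conj c * m * c * hphase
  have hoff : ∀ (c c' m : ℂ) (x y : ℝ),
      conj c * exp (I * t * x) * m * exp (-(I * t) * y) * c' =
        conj c * c' * m * exp (I * ↑(x - y) * t) := by
    intro c c' m x y
    rw [ofReal_sub, show I * (↑x - ↑y) * t = I * t * x + -(I * t) * y by ring, exp_add]
    ring
  rw [← neg_smul, exp_smul_eq_of_eigenvectors hv hHv, exp_smul_eq_of_eigenvectors hv hHv,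
    star_dotProduct_conj_mul_conj_mulVec, Finset.sum_sum_eq_sum_add_sum_offDiag]
  simp only [hdiag, hoff, add_sub_cancel_left]

end Matrix

theorem temporal_fluctuation_eq_general (d : ℕ)
    (H : Matrix (Fin d) (Fin d) ℂ)
    (v : Fin d → (Fin d → ℂ))
    (hv : ∀ j k, star (v j) ⬝ᵥ v k = if j = k then 1 else 0)
    (e : Fin d → ℝ) (heig : ∀ j, H.mulVec (v j) = (e j : ℂ) • v j)
    (hndg : ∀ j k j' k' : Fin d, j ≠ k → j' ≠ k' →
      e j - e k = e j' - e k' → j = j' ∧ k = k')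
    (B : Matrix (Fin d) (Fin d) ℂ) (ψ : Fin d → ℂ)
    (Bbar : ℂ)
    (hBbar : Bbar = ∑ j, (‖star (v j) ⬝ᵥ ψ‖ : ℂ) ^ 2 * (star (v j) ⬝ᵥ B.mulVec (v j))) :
    Filter.Tendsto
      (fun T : ℝ => T⁻¹ * ∫ t in (0 : ℝ)..T,
        ‖star ψ ⬝ᵥ ((NormedSpace.exp ((Complex.I * t) • H) * B *
          NormedSpace.exp (-((Complex.I * t) • H))).mulVec ψ) - Bbar‖ ^ 2)
      Filter.atTop
      (nhds (∑ j, ∑ k, if j ≠ k then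
        ‖star (v j) ⬝ᵥ ψ‖ ^ 2 * ‖star (v k) ⬝ᵥ ψ‖ ^ 2 * ‖star (v j) ⬝ᵥ B.mulVec (v k)‖ ^ 2
        else 0)) := by
  have hgaps : Set.InjOn (fun p : Fin d × Fin d => e p.1 - e p.2)
      (Finset.univ.offDiag : Finset (Fin d × Fin d)) := by
    rintro ⟨j, k⟩ hjk ⟨j', k'⟩ hjk' h
    rw [Finset.mem_coe, Finset.mem_offDiag] at hjk hjk'
    obtain ⟨rfl, rfl⟩ := hndg j k j' k' hjk.2.2 hjk'.2.2 h
    rfl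
  have hmean := tendsto_inv_mul_integral_norm_sum_exp_sq _
    (fun p => conj (star (v p.1) ⬝ᵥ ψ) * (star (v p.2) ⬝ᵥ ψ) * (star (v p.1) ⬝ᵥ B *ᵥ v p.2)) _
    hgaps
  simp only [norm_mul, RCLike.norm_conj, mul_pow] at hmean
  simp only [hBbar, Matrix.star_dotProduct_exp_mul_mul_exp_mulVec_sub_eq_sum_offDiag hv heig,
    Finset.sum_sum_eq_sum_add_sum_offDiag, ne_eq, not_true_eq_false, if_false,
    Finset.sum_const_zero, zero_add]
  rwa [Finset.sum_ite_of_true fun p hp => (Finset.mem_offDiag.mp hp).2.2]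

/-- Let `H` be a Hermitian matrix on `ℂ^d` with orthonormal eigenbasis `{|j⟩}` and
eigenvalues `{e_j}` whose spectrum has non-degenerate gaps. Then for any matrix `B` and
any unit vector `|ψ⟩`, writing `B̄ = Σ_j |⟨j|ψ⟩|² ⟨j|B|j⟩`, the temporal fluctuation
`ΔB = lim_{T→∞} (1/T) ∫₀^T |⟨ψ| e^{iHt} B e^{−iHt} |ψ⟩ − B̄|² dt` exists and equals
`Σ_{j≠k} |⟨j|ψ⟩|² |⟨k|ψ⟩|² |⟨j|B|k⟩|²`. -/
theorem temporal_fluctuation_eq (d : ℕ)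
    (H : Matrix (Fin d) (Fin d) ℂ) (hH : H.IsHermitian)
    (v : Fin d → (Fin d → ℂ))
    (hv : ∀ j k, star (v j) ⬝ᵥ v k = if j = k then 1 else 0)
    (e : Fin d → ℝ) (heig : ∀ j, H.mulVec (v j) = (e j : ℂ) • v j)
    (hndg : ∀ j k j' k' : Fin d, j ≠ k → j' ≠ k' →
      e j - e k = e j' - e k' → j = j' ∧ k = k')
    (B : Matrix (Fin d) (Fin d) ℂ) (ψ : Fin d → ℂ) (hψ : star ψ ⬝ᵥ ψ = 1)
    (Bbar : ℂ)
    (hBbar : Bbar = ∑ j, (‖star (v j) ⬝ᵥ ψ‖ : ℂ) ^ 2 * (star (v j) ⬝ᵥ B.mulVec (v j))) :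
    Filter.Tendsto
      (fun T : ℝ => T⁻¹ * ∫ t in (0 : ℝ)..T,
        ‖star ψ ⬝ᵥ ((NormedSpace.exp ((Complex.I * t) • H) * B *
          NormedSpace.exp (-((Complex.I * t) • H))).mulVec ψ) - Bbar‖ ^ 2)
      Filter.atTop
      (nhds (∑ j, ∑ k, if j ≠ k then
        ‖star (v j) ⬝ᵥ ψ‖ ^ 2 * ‖star (v k) ⬝ᵥ ψ‖ ^ 2 * ‖star (v j) ⬝ᵥ B.mulVec (v k)‖ ^ 2
        else 0)) :=
  temporal_fluctuation_eq_general d H v hv e heig hndg B ψ Bbar hBbar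
end
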